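/- arXiv:1909.11475 — 5 statements merged into one kernel-verified Lean document; each statement's English description precedes it below -/
import Mathlib

section
/- Let F : ℝ → ℝ be continuous and 1-periodic, and let p, λ ∈ ℝ. The equation |p + v'(y)| + F(y) = λ admits a continuous 1-periodic viscosity solution v if and only if λ = max{ max_{y ∈ [0,1]} F(y), |p| + ∫₀¹ F(y) dy }. -/
open Set

/-- A continuous 1-periodic `v : ℝ → ℝ` is a viscosity solution of
`|p + v'(y)| + F(y) = λ` on `ℝ`: for every `C¹` test function `φ`,
`|p + φ'(y₀)| + F(y₀) ≤ λ` at local maxima of `v − φ` and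
`|p + φ'(y₀)| + F(y₀) ≥ λ` at local minima of `v − φ`. -/
def IsPeriodicCellSolution (F : ℝ → ℝ) (p lam : ℝ) (v : ℝ → ℝ) : Prop :=
  ∀ φ : ℝ → ℝ, ContDiff ℝ 1 φ →
    (∀ y₀ : ℝ, IsLocalMax (fun y => v y - φ y) y₀ → |p + deriv φ y₀| + F y₀ ≤ lam) ∧
    (∀ y₀ : ℝ, IsLocalMin (fun y => v y - φ y) y₀ → lam ≤ |p + deriv φ y₀| + F y₀)

open Filter Topology

/-!
Substituting `u y = v y + p * y` turns the cell problem into the eikonal equation `|u'| = λ - F`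
for a function with `u (y + 1) = u y + p`. Testing a subsolution at touching points gives `F ≤ λ`
and `|u b - u a| ≤ ∫ₐᵇ (λ - F)`, hence `λ ≥ max F` and `λ ≥ |p| + ∫ F`. If `λ > max F`, a
supersolution has no local minimum, so `u` is monotone (it gains `p` per period), its test slopes
at minima have the sign of `p`, and `∫₀¹ (λ - F) ≤ |p|`. Conversely, if `λ = |p| + ∫ F` a primitive
of `±(λ - F)` is a classical solution; if `λ = max F = F y₀ > |p| + ∫ F` and
`Φ y = ∫_{y₀}^y (λ - F)`, the minimum `u` of the classical solutions `|Φ|` and `2 Φ c - Φ` has a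
concave kink at a point `c` chosen so that `u` gains exactly `p` over a period, and `u - p y` then
extends periodically.
-/

section Viscosity

variable {H : ℝ → ℝ → ℝ} {u g : ℝ → ℝ}

def IsViscositySubsolution (H : ℝ → ℝ → ℝ) (u : ℝ → ℝ) : Prop :=
  ∀ φ : ℝ → ℝ, ContDiff ℝ 1 φ → ∀ y, IsLocalMax (fun x => u x - φ x) y → H y (deriv φ y) ≤ 0

def IsViscositySupersolution (H : ℝ → ℝ → ℝ) (u : ℝ → ℝ) : Prop :=
  ∀ φ : ℝ → ℝ, ContDiff ℝ 1 φ → ∀ y, IsLocalMin (fun x => u x - φ x) y → 0 ≤ H y (deriv φ y)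

def IsViscositySolution (H : ℝ → ℝ → ℝ) (u : ℝ → ℝ) : Prop :=
  IsViscositySubsolution H u ∧ IsViscositySupersolution H u

theorem IsViscositySubsolution.mono {H' : ℝ → ℝ → ℝ} (h : IsViscositySubsolution H u)
    (hH : ∀ y q, H' y q ≤ H y q) : IsViscositySubsolution H' u :=
  fun φ hφ y hy => (hH _ _).trans (h φ hφ y hy)

theorem IsViscositySubsolution.comp_neg (h : IsViscositySubsolution H u) :
    IsViscositySubsolution (fun y q => H (-y) (-q)) (fun y => u (-y)) := by
  intro φ hφ y hy
  have hmax : IsLocalMax (fun x => u x - φ (-x)) (-y) := by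
    rw [← neg_neg y] at hy
    simpa [Function.comp_def] using hy.comp_continuous continuous_neg.continuousAt
  simpa [deriv_comp_neg] using h (fun x => φ (-x)) (hφ.comp contDiff_neg) (-y) hmax

theorem IsViscositySupersolution.comp_neg (h : IsViscositySupersolution H u) :
    IsViscositySupersolution (fun y q => H (-y) (-q)) (fun y => u (-y)) := by
  intro φ hφ y hy
  have hmin : IsLocalMin (fun x => u x - φ (-x)) (-y) := by
    rw [← neg_neg y] at hy
    simpa [Function.comp_def] using hy.comp_continuous continuous_neg.continuousAt
  simpa [deriv_comp_neg] using h (fun x => φ (-x)) (hφ.comp contDiff_neg) (-y) hmin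

theorem IsViscositySupersolution.neg (h : IsViscositySupersolution H u) :
    IsViscositySubsolution (fun y q => -H y (-q)) (fun y => -u y) := by
  intro φ hφ y hy
  have hmin : IsLocalMin (fun x => u x - -φ x) y := by
    simpa [sub_eq_add_neg, add_comm] using hy.neg
  simpa using h _ hφ.neg y hmin

theorem IsViscositySubsolution.comp_sub_add (h : IsViscositySubsolution H u) {s : ℝ}
    (hH : ∀ y q, H (y - s) q = H y q) (c : ℝ) :
    IsViscositySubsolution H (fun y => u (y - s) + c) := by
  intro φ hφ y hy
  have hmax : IsLocalMax (fun x => u x - (φ (x + s) - c)) (y - s) := by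
    have := IsLocalMax.comp_continuous (f := fun x => u (x - s) + c - φ x)
      (g := fun x => x + s) (b := y - s) (by simpa using hy) (continuous_add_const s).continuousAt
    convert this using 1
    funext x
    simp only [Function.comp_apply, add_sub_cancel_right]
    ring
  have := h _ ((hφ.comp (contDiff_id.add contDiff_const)).sub contDiff_const) (y - s) hmax
  simpa [deriv_comp_add_const, hH] using this

theorem IsViscositySupersolution.comp_sub_add (h : IsViscositySupersolution H u) {s : ℝ}
    (hH : ∀ y q, H (y - s) q = H y q) (c : ℝ) :
    IsViscositySupersolution H (fun y => u (y - s) + c) := by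
  intro φ hφ y hy
  have hmin : IsLocalMin (fun x => u x - (φ (x + s) - c)) (y - s) := by
    have := IsLocalMin.comp_continuous (f := fun x => u (x - s) + c - φ x)
      (g := fun x => x + s) (b := y - s) (by simpa using hy) (continuous_add_const s).continuousAt
    convert this using 1
    funext x
    simp only [Function.comp_apply, add_sub_cancel_right]
    ring
  have := h _ ((hφ.comp (contDiff_id.add contDiff_const)).sub contDiff_const) (y - s) hmin
  simpa [deriv_comp_add_const, hH] using this

theorem IsViscositySubsolution.of_eventuallyEq
    (h : ∀ x, ∃ w, IsViscositySubsolution H w ∧ u =ᶠ[𝓝 x] w) : IsViscositySubsolution H u := by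
  intro φ hφ x hx
  obtain ⟨w, hw, hwx⟩ := h x
  exact hw φ hφ x (hx.congr (hwx.sub (EventuallyEq.refl _ φ)))

theorem IsViscositySupersolution.of_eventuallyEq
    (h : ∀ x, ∃ w, IsViscositySupersolution H w ∧ u =ᶠ[𝓝 x] w) :
    IsViscositySupersolution H u := by
  intro φ hφ x hx
  obtain ⟨w, hw, hwx⟩ := h x
  exact hw φ hφ x (hx.congr (hwx.sub (EventuallyEq.refl _ φ)))

theorem IsViscositySubsolution.sub_contDiff (h : IsViscositySubsolution H u) {G : ℝ → ℝ}
    (hG : ContDiff ℝ 1 G) :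
    IsViscositySubsolution (fun y q => H y (q + deriv G y)) (fun y => u y - G y) := by
  intro φ hφ y hy
  have := h (fun x => G x + φ x) (hG.add hφ) y (by simpa only [sub_sub] using hy)
  rwa [deriv_fun_add (hG.differentiable one_ne_zero y) (hφ.differentiable one_ne_zero y),
    add_comm] at this

theorem antitone_of_isViscositySubsolution (hu : Continuous u)
    (h : IsViscositySubsolution (fun _ q => q) u) : Antitone u := by
  intro a b hab
  by_contra! hlt
  have hab' : a < b := hab.lt_of_ne (by rintro rfl; exact lt_irrefl _ hlt)
  set K := (u b - u a) / (2 * (b - a)) with hK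
  have hK0 : 0 < K := div_pos (by linarith) (by linarith)
  have hKba : K * (b - a) = (u b - u a) / 2 := by
    rw [hK]; field_simp [(sub_pos.2 hab').ne']
  set C := |u (b + 1) - u b| + 1
  -- a test function of slope `≥ K`, bent up beyond `b` so that `u - φ` peaks inside `(a, b + 1)`
  set φ : ℝ → ℝ := fun y => K * (y - a) + C * Real.smoothTransition (y - b) with hφdef
  have hφ : ContDiff ℝ 1 φ := (contDiff_const.mul (contDiff_id.sub contDiff_const)).add
    (contDiff_const.mul (Real.smoothTransition.contDiff.comp (contDiff_id.sub contDiff_const)))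
  have hφa : φ a = 0 := by
    simp [hφdef, Real.smoothTransition.zero_of_nonpos (by linarith : a - b ≤ 0)]
  have hφb : φ b = K * (b - a) := by simp [hφdef]
  have hφb1 : φ (b + 1) = K * (b + 1 - a) + C := by simp [hφdef]
  obtain ⟨m, hm, hmax⟩ := isCompact_Icc.exists_isMaxOn (nonempty_Icc.2 (by linarith : a ≤ b + 1))
    (hu.sub hφ.continuous).continuousOn
  have hbm := isMaxOn_iff.1 hmax b ⟨hab, by linarith⟩
  have ham : a < m := hm.1.lt_of_ne (by
    rintro rfl
    simp only [Pi.sub_apply, hφa, hφb] at hbm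
    linarith)
  have hmb : m < b + 1 := hm.2.lt_of_ne (by
    rintro rfl
    simp only [Pi.sub_apply, hφb, hφb1] at hbm
    linarith [le_abs_self (u (b + 1) - u b)])
  have hderiv : HasDerivAt φ (K + C * deriv Real.smoothTransition (m - b)) m := by
    have hst := ((Real.smoothTransition.contDiff (n := 1)).differentiable one_ne_zero
      (m - b)).hasDerivAt.comp_sub_const m b
    have := (((hasDerivAt_id m).sub_const a).const_mul K).add (hst.const_mul C)
    rwa [mul_one] at this
  have := h φ hφ m (hmax.isLocalMax (Icc_mem_nhds ham hmb))
  rw [hderiv.deriv] at this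
  have : 0 ≤ C * deriv Real.smoothTransition (m - b) :=
    mul_nonneg (by positivity) Real.smoothTransition.monotone.deriv_nonneg
  linarith

theorem contDiff_one_integral (hg : Continuous g) (a : ℝ) :
    ContDiff ℝ 1 (fun y => ∫ t in a..y, g t) := by
  rw [contDiff_one_iff_deriv]
  refine ⟨fun y => (hg.integral_hasStrictDerivAt a y).hasDerivAt.differentiableAt, ?_⟩
  rwa [show deriv (fun y => ∫ t in a..y, g t) = g from funext (Continuous.deriv_integral g hg a)]

theorem IsViscositySubsolution.sub_le_integral (hu : Continuous u) (hg : Continuous g)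
    (h : IsViscositySubsolution (fun y q => q - g y) u) {a b : ℝ} (hab : a ≤ b) :
    u b - u a ≤ ∫ y in a..b, g y := by
  have hG := contDiff_one_integral hg a
  have := antitone_of_isViscositySubsolution (hu.sub hG.continuous)
    ((h.sub_contDiff hG).mono (H' := fun _ q => q) fun y q => by
      simp [Continuous.deriv_integral g hg]) hab
  simp only [Pi.sub_apply, intervalIntegral.integral_same, sub_zero] at this
  linarith

theorem IsViscositySupersolution.integral_le_sub (hu : Continuous u) (hg : Continuous g)
    (h : IsViscositySupersolution (fun y q => q - g y) u) {a b : ℝ} (hab : a ≤ b) :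
    ∫ y in a..b, g y ≤ u b - u a := by
  have := (h.neg.mono (H' := fun y q => q - -g y) fun y q => le_of_eq (by ring)).sub_le_integral
    hu.neg hg.neg hab
  simp only [Pi.neg_apply, intervalIntegral.integral_neg] at this
  linarith

end Viscosity

section Eikonal

variable {u g : ℝ → ℝ}

abbrev eikonal (g : ℝ → ℝ) : ℝ → ℝ → ℝ := fun y q => |q| - g y

theorem IsViscositySubsolution.abs_sub_le_integral (hu : Continuous u) (hg : Continuous g)
    (h : IsViscositySubsolution (eikonal g) u) {a b : ℝ} (hab : a ≤ b) :
    |u b - u a| ≤ ∫ y in a..b, g y := by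
  have hright := (h.mono (H' := fun y q => q - g y) fun y q =>
    sub_le_sub_right (le_abs_self q) _).sub_le_integral hu hg hab
  have hleft := (h.comp_neg.mono (H' := fun y q => q - g (-y)) fun y q =>
    sub_le_sub_right ((le_abs_self q).trans_eq (abs_neg q).symm) _).sub_le_integral
    (hu.comp continuous_neg : Continuous fun y => u (-y))
    (hg.comp continuous_neg : Continuous fun y => g (-y)) (neg_le_neg hab)
  simp only [Function.comp_def] at hleft
  rw [intervalIntegral.integral_comp_neg] at hleft
  simp only [neg_neg] at hleft
  exact abs_le.2 ⟨by linarith, hright⟩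

theorem exists_isLocalMax_sub_of_mem_nhds (hu : Continuous u) {s : Set ℝ} {z : ℝ}
    (hs : s ∈ 𝓝 z) : ∃ φ : ℝ → ℝ, ContDiff ℝ 1 φ ∧ ∃ y ∈ s, IsLocalMax (fun x => u x - φ x) y := by
  obtain ⟨δ, hδ, hball⟩ := Metric.mem_nhds_iff.1 hs
  set r := δ / 2 with hrdef
  have hr : 0 < r := half_pos hδ
  set C := (|u (z - r) - u z| + |u (z + r) - u z| + 1) / r ^ 2 with hCdef
  have hCr : C * r ^ 2 = |u (z - r) - u z| + |u (z + r) - u z| + 1 := by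
    rw [hCdef, div_mul_cancel₀ _ (pow_ne_zero 2 hr.ne')]
  have hφ : ContDiff ℝ 1 fun x => C * (x - z) ^ 2 :=
    contDiff_const.mul ((contDiff_id.sub contDiff_const).pow 2)
  obtain ⟨m, hm, hmax⟩ := isCompact_Icc.exists_isMaxOn
    (nonempty_Icc.2 (by linarith : z - r ≤ z + r)) (hu.sub hφ.continuous).continuousOn
  have hzm : u z ≤ u m - C * (m - z) ^ 2 := by
    simpa using isMaxOn_iff.1 hmax z ⟨by linarith, by linarith⟩
  have hlo : z - r < m := hm.1.lt_of_ne (by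
    rintro rfl
    simp only [sub_sub_cancel_left, neg_sq] at hzm
    linarith [le_abs_self (u (z - r) - u z), abs_nonneg (u (z + r) - u z)])
  have hhi : m < z + r := hm.2.lt_of_ne (by
    rintro rfl
    simp only [add_sub_cancel_left] at hzm
    linarith [le_abs_self (u (z + r) - u z), abs_nonneg (u (z - r) - u z)])
  refine ⟨_, hφ, m, hball ?_, hmax.isLocalMax (Icc_mem_nhds hlo hhi)⟩
  rw [Metric.mem_ball, Real.dist_eq, abs_sub_lt_iff]
  constructor <;> linarith

theorem IsViscositySubsolution.nonneg_of_eikonal (hu : Continuous u) (hg : Continuous g)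
    (h : IsViscositySubsolution (eikonal g) u) (z : ℝ) : 0 ≤ g z := by
  by_contra! hz
  obtain ⟨φ, hφ, y, hy, hmax⟩ :=
    exists_isLocalMax_sub_of_mem_nhds hu (hg.continuousAt.preimage_mem_nhds (Iio_mem_nhds hz))
  have := h φ hφ y hmax
  linarith [abs_nonneg (deriv φ y), show g y < 0 from hy]

theorem IsViscositySupersolution.not_isLocalMin_of_eikonal
    (h : IsViscositySupersolution (eikonal g) u) (hg : ∀ y, 0 < g y) (y : ℝ) :
    ¬IsLocalMin u y := by
  intro hy
  have := h (fun _ => 0) contDiff_const y (by simpa using hy)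
  simp only [eikonal, deriv_const, abs_zero, zero_sub, neg_nonneg] at this
  linarith [hg y]

theorem monotone_of_forall_not_isLocalMin (hu : Continuous u) (hmin : ∀ y, ¬IsLocalMin u y)
    {p : ℝ} (hp : 0 ≤ p) (hshift : ∀ y, u (y + 1) = u y + p) : Monotone u := by
  have hnat : ∀ (y : ℝ) (n : ℕ), u (y + n) = u y + n * p := by
    intro y n
    induction n with
    | zero => simp
    | succ n ih => rw [Nat.cast_succ, ← add_assoc, hshift, ih]; ring
  intro s t hst
  by_contra! hts
  obtain ⟨n, hn⟩ := exists_nat_ge (t - s)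
  have hsn : u s ≤ u (s + n) := by
    rw [hnat]
    linarith [mul_nonneg n.cast_nonneg hp]
  obtain ⟨m, hm, hmin'⟩ := isCompact_Icc.exists_isMinOn
    (nonempty_Icc.2 (by linarith : s ≤ s + n)) hu.continuousOn
  have hmt := isMinOn_iff.1 hmin' t ⟨hst, by linarith⟩
  have hsm : s < m := hm.1.lt_of_ne (by rintro rfl; linarith)
  have hmr : m < s + n := hm.2.lt_of_ne (by rintro rfl; linarith)
  exact hmin m (hmin'.isLocalMin (Icc_mem_nhds hsm hmr))

theorem Monotone.deriv_nonneg_of_isLocalMin_sub {φ : ℝ → ℝ} {y : ℝ} (hu : Monotone u)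
    (hφ : DifferentiableAt ℝ φ y) (h : IsLocalMin (fun x => u x - φ x) y) : 0 ≤ deriv φ y := by
  refine _root_.ge_of_tendsto ((hasDerivAt_iff_tendsto_slope.1 hφ.hasDerivAt).mono_left
    (nhdsLT_le_nhdsNE y)) ?_
  filter_upwards [nhdsWithin_le_nhds h, self_mem_nhdsWithin] with x hx hxy
  have hxy : x < y := hxy
  rw [slope_def_field]
  exact div_nonneg_of_nonpos (by linarith [hu hxy.le]) (by linarith)

theorem IsViscositySupersolution.integral_le_of_shift (hu : Continuous u) (hg : Continuous g)
    (hpos : ∀ y, 0 < g y) (h : IsViscositySupersolution (eikonal g) u) {p : ℝ} (hp : 0 ≤ p)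
    (hshift : ∀ y, u (y + 1) = u y + p) : ∫ y in (0 : ℝ)..1, g y ≤ p := by
  have hmono := monotone_of_forall_not_isLocalMin hu (h.not_isLocalMin_of_eikonal hpos) hp hshift
  have hsuper : IsViscositySupersolution (fun y q => q - g y) u := fun φ hφ y hy => by
    have := h φ hφ y hy
    rwa [eikonal, abs_of_nonneg
      (hmono.deriv_nonneg_of_isLocalMin_sub (hφ.differentiable one_ne_zero y) hy)] at this
  have := hsuper.integral_le_sub hu hg zero_le_one
  have h1 := hshift 0
  rw [zero_add] at h1
  linarith

theorem IsViscositySupersolution.integral_le_abs (hu : Continuous u) (hg : Continuous g)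
    (hgper : Function.Periodic g 1) (hpos : ∀ y, 0 < g y)
    (h : IsViscositySupersolution (eikonal g) u) {p : ℝ} (hshift : ∀ y, u (y + 1) = u y + p) :
    ∫ y in (0 : ℝ)..1, g y ≤ |p| := by
  rcases le_total 0 p with hp | hp
  · exact (h.integral_le_of_shift hu hg hpos hp hshift).trans (le_abs_self p)
  · have hrefl : IsViscositySupersolution (eikonal fun y => g (-y)) fun y => u (-y) := by
      simpa only [eikonal, abs_neg] using h.comp_neg
    have := hrefl.integral_le_of_shift (hu.comp continuous_neg : Continuous fun y => u (-y))
      (hg.comp continuous_neg : Continuous fun y => g (-y)) (fun y => hpos (-y))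
      (neg_nonneg.2 hp) fun y => by
        have := hshift (-(y + 1))
        rw [show -(y + 1) + 1 = -y by ring] at this
        show u (-(y + 1)) = u (-y) + -p
        linarith
    simp only [Function.comp_def] at this
    rw [intervalIntegral.integral_comp_neg, neg_zero,
      show ∫ y in (-1 : ℝ)..0, g y = ∫ y in (0 : ℝ)..1, g y by
        simpa using hgper.intervalIntegral_add_eq (-1) 0] at this
    rw [abs_of_nonpos hp]
    exact this

end Eikonal

section Construction

variable {f₁ f₂ φ : ℝ → ℝ} {d₁ d₂ d y : ℝ}

theorem mem_uIcc_of_isLocalMax_min_sub (h : IsLocalMax (fun x => min (f₁ x) (f₂ x) - φ x) y)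
    (hf₁ : HasDerivAt f₁ d₁ y) (hf₂ : HasDerivAt f₂ d₂ y) (hφ : HasDerivAt φ d y) :
    d ∈ uIcc d₁ d₂ := by
  have hinc : ∀ᶠ x in 𝓝 y, min (f₁ x - f₁ y) (f₂ x - f₂ y) ≤ φ x - φ y := by
    filter_upwards [h] with x hx
    have := min_le_left (f₁ y) (f₂ y)
    have := min_le_right (f₁ y) (f₂ y)
    rcases min_choice (f₁ x) (f₂ x) with hx' | hx' <;> rw [hx'] at hx
    · exact (min_le_left _ _).trans (by linarith)
    · exact (min_le_right _ _).trans (by linarith)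
  have hslope {f : ℝ → ℝ} {d : ℝ} (hf : HasDerivAt f d y) :=
    hasDerivAt_iff_tendsto_slope.1 hf
  constructor
  · refine le_of_tendsto_of_tendsto (((hslope hf₁).min (hslope hf₂)).mono_left
      (nhdsGT_le_nhdsNE y)) ((hslope hφ).mono_left (nhdsGT_le_nhdsNE y)) ?_
    filter_upwards [nhdsWithin_le_nhds hinc, self_mem_nhdsWithin] with x hx hxy
    have hxy : 0 ≤ x - y := sub_nonneg.2 (le_of_lt hxy)
    simp only [slope_def_field]
    rw [min_div_div_right hxy]
    exact div_le_div_of_nonneg_right hx hxy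
  · refine le_of_tendsto_of_tendsto ((hslope hφ).mono_left (nhdsLT_le_nhdsNE y))
      (((hslope hf₁).max (hslope hf₂)).mono_left (nhdsLT_le_nhdsNE y)) ?_
    filter_upwards [nhdsWithin_le_nhds hinc, self_mem_nhdsWithin] with x hx hxy
    have hxy : x - y ≤ 0 := sub_nonpos.2 (le_of_lt hxy)
    simp only [slope_def_field]
    rw [max_div_div_right_of_nonpos hxy]
    exact div_le_div_of_nonpos_of_le hxy hx

theorem eq_or_eq_of_isLocalMin_min_sub (h : IsLocalMin (fun x => min (f₁ x) (f₂ x) - φ x) y)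
    (hf₁ : HasDerivAt f₁ d₁ y) (hf₂ : HasDerivAt f₂ d₂ y) (hφ : HasDerivAt φ d y) :
    d = d₁ ∨ d = d₂ := by
  rcases min_choice (f₁ y) (f₂ y) with hy | hy
  · have : IsLocalMin (fun x => f₁ x - φ x) y :=
      Filter.EventuallyLE.isLocalMin (Eventually.of_forall fun x => by
        simp only [min_le_left, sub_le_sub_right]) (by simp only [hy]) h
    exact Or.inl (sub_eq_zero.1 (this.hasDerivAt_eq_zero (hf₁.sub hφ))).symm
  · have : IsLocalMin (fun x => f₂ x - φ x) y :=
      Filter.EventuallyLE.isLocalMin (Eventually.of_forall fun x => by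
        simp only [min_le_right, sub_le_sub_right]) (by simp only [hy]) h
    exact Or.inr (sub_eq_zero.1 (this.hasDerivAt_eq_zero (hf₂.sub hφ))).symm

theorem isViscositySolution_min {g f₁' f₂' : ℝ → ℝ}
    (hf₁ : ∀ y, HasDerivAt f₁ (f₁' y) y) (hf₂ : ∀ y, HasDerivAt f₂ (f₂' y) y)
    (h₁ : ∀ y, |f₁' y| = g y) (h₂ : ∀ y, |f₂' y| = g y) :
    IsViscositySolution (eikonal g) (fun y => min (f₁ y) (f₂ y)) := by
  constructor
  · intro φ hφ y hy
    have hd := mem_uIcc_of_isLocalMax_min_sub hy (hf₁ y) (hf₂ y)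
      (hφ.differentiable one_ne_zero y).hasDerivAt
    exact sub_nonpos.2 (abs_le.2
      (uIcc_subset_Icc (abs_le.1 (h₁ y).le) (abs_le.1 (h₂ y).le) hd))
  · intro φ hφ y hy
    rcases eq_or_eq_of_isLocalMin_min_sub hy (hf₁ y) (hf₂ y)
      (hφ.differentiable one_ne_zero y).hasDerivAt with hd | hd
    · rw [eikonal, hd, h₁ y, sub_self]
    · rw [eikonal, hd, h₂ y, sub_self]

theorem exists_periodic_eqOn {w : ℝ → ℝ} {a b : ℝ} (hb : b ≤ a + 1)
    (hw : ∀ y ∈ Ioo a b, w (y + 1) = w y) :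
    ∃ v : ℝ → ℝ, Function.Periodic v 1 ∧ EqOn v w (Ioo a (b + 1)) := by
  refine ⟨fun y => w (b + Int.fract (y - b)), fun y => by
    simp only [add_sub_right_comm y 1 b, Int.fract_add_one], ?_⟩
  rintro y ⟨hay, hyb⟩
  rcases le_or_gt b y with hby | hby
  · simp only [Int.fract_eq_self.2 ⟨sub_nonneg.2 hby, by linarith⟩, add_sub_cancel]
  · have : Int.fract (y - b) = y - b + 1 :=
      Int.fract_eq_iff.2 ⟨by linarith, by linarith, -1, by push_cast; ring⟩
    simp only [this, show b + (y - b + 1) = y + 1 by ring]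
    exact hw y ⟨hay, hby⟩

end Construction

section CellProblem

variable {F : ℝ → ℝ} {p lam : ℝ}

theorem isPeriodicCellSolution_iff {v : ℝ → ℝ} :
    IsPeriodicCellSolution F p lam v ↔
      IsViscositySolution (eikonal fun y => lam - F y) (fun y => v y + p * y) := by
  have hlin : ∀ (φ : ℝ → ℝ) (c y : ℝ), ContDiff ℝ 1 φ →
      ContDiff ℝ 1 (fun x => φ x + c * x) ∧ deriv (fun x => φ x + c * x) y = deriv φ y + c := by
    intro φ c y hφ
    refine ⟨hφ.add (contDiff_const.mul contDiff_id), ?_⟩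
    have hd := (hφ.differentiable one_ne_zero y).hasDerivAt.add ((hasDerivAt_id' y).const_mul c)
    rw [mul_one] at hd
    exact hd.deriv
  constructor
  · intro h
    constructor
    · intro φ hφ y hy
      obtain ⟨hψ, hψ'⟩ := hlin φ (-p) y hφ
      have := (h _ hψ).1 y (by convert hy using 2; ring)
      rw [hψ', show p + (deriv φ y + -p) = deriv φ y by ring] at this
      exact sub_nonpos.2 (by linarith)
    · intro φ hφ y hy
      obtain ⟨hψ, hψ'⟩ := hlin φ (-p) y hφ
      have := (h _ hψ).2 y (by convert hy using 2; ring)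
      rw [hψ', show p + (deriv φ y + -p) = deriv φ y by ring] at this
      exact sub_nonneg.2 (by linarith)
  · rintro ⟨hsub, hsuper⟩ φ hφ
    constructor
    · intro y hy
      obtain ⟨hψ, hψ'⟩ := hlin φ p y hφ
      have := hsub _ hψ y (by convert hy using 2; ring)
      simp only [eikonal, hψ', add_comm (deriv φ y)] at this
      linarith
    · intro y hy
      obtain ⟨hψ, hψ'⟩ := hlin φ p y hφ
      have := hsuper _ hψ y (by convert hy using 2; ring)
      simp only [eikonal, hψ', add_comm (deriv φ y)] at this
      linarith

theorem exists_isPeriodicCellSolution_of_eikonal {u : ℝ → ℝ} {a b : ℝ}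
    (hF : Function.Periodic F 1) (hu : Continuous u)
    (hsol : IsViscositySolution (eikonal fun y => lam - F y) u) (hab : a < b) (hb : b ≤ a + 1)
    (hshift : ∀ y ∈ Ioo a b, u (y + 1) = u y + p) :
    ∃ v : ℝ → ℝ, Continuous v ∧ Function.Periodic v 1 ∧ IsPeriodicCellSolution F p lam v := by
  obtain ⟨v, hv, hvu⟩ := exists_periodic_eqOn (w := fun y => u y - p * y) hb fun y hy => by
    simp only [hshift y hy]
    ring
  have hloc : ∀ x, ∃ k : ℤ, v =ᶠ[𝓝 x] fun y => u (y - k) - p * (y - k) := by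
    intro x
    refine ⟨⌊x - b⌋, ?_⟩
    have hx : x - ⌊x - b⌋ ∈ Ioo a (b + 1) :=
      ⟨by linarith [Int.floor_le (x - b)], by linarith [Int.lt_floor_add_one (x - b)]⟩
    filter_upwards [(continuous_sub_right _).continuousAt.eventually_mem
      (isOpen_Ioo.mem_nhds hx)] with y hy
    rw [← hv.sub_int_mul_eq ⌊x - b⌋, mul_one]
    exact hvu hy
  have hH (k : ℤ) (y q : ℝ) :
      eikonal (fun y => lam - F y) (y - k) q = eikonal (fun y => lam - F y) y q := by
    have hFk := hF.sub_int_mul_eq (x := y) k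
    rw [mul_one] at hFk
    simp only [eikonal, hFk]
  have hlocu (x : ℝ) : ∃ k : ℤ,
      (fun y => v y + p * y) =ᶠ[𝓝 x] fun y => u (y - k) + p * k := by
    obtain ⟨k, hk⟩ := hloc x
    refine ⟨k, ?_⟩
    filter_upwards [hk] with y hy
    rw [hy]
    ring
  refine ⟨v, continuous_iff_continuousAt.2 fun x => ?_, hv,
    isPeriodicCellSolution_iff.2 ⟨.of_eventuallyEq fun x => ?_, .of_eventuallyEq fun x => ?_⟩⟩
  · obtain ⟨k, hk⟩ := hloc x
    exact ((hu.comp (continuous_sub_right _)).sub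
      (continuous_const.mul (continuous_sub_right _))).continuousAt.congr hk.symm
  · obtain ⟨k, hk⟩ := hlocu x
    exact ⟨_, hsol.1.comp_sub_add (hH k) (p * k), hk⟩
  · obtain ⟨k, hk⟩ := hlocu x
    exact ⟨_, hsol.2.comp_sub_add (hH k) (p * k), hk⟩

theorem hasDerivAt_abs_integral {g : ℝ → ℝ} {y₀ : ℝ} (hg : Continuous g) (hg0 : ∀ y, 0 ≤ g y)
    (hgy₀ : g y₀ = 0) (y : ℝ) :
    HasDerivAt (fun y => |∫ t in y₀..y, g t|) (if y ≤ y₀ then -g y else g y) y := by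
  have hσ : Continuous fun t => if t ≤ y₀ then -g t else g t :=
    hg.neg.if_le hg continuous_id continuous_const fun t ht => by simp [ht, hgy₀]
  have heq : (fun y => ∫ t in y₀..y, if t ≤ y₀ then -g t else g t) =
      fun y => |∫ t in y₀..y, g t| := by
    funext y
    rcases le_total y y₀ with hy | hy
    · rw [intervalIntegral.integral_congr (g := fun t => -g t) fun t ht => if_pos ?_,
        intervalIntegral.integral_neg, abs_of_nonpos]
      · rw [intervalIntegral.integral_symm, neg_nonpos]
        exact intervalIntegral.integral_nonneg hy fun t _ => hg0 t
      · exact (uIcc_of_ge hy ▸ ht).2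
    · rw [intervalIntegral.integral_congr (g := g) fun t ht => ?_,
        abs_of_nonneg (intervalIntegral.integral_nonneg hy fun t _ => hg0 t)]
      rw [uIcc_of_le hy] at ht
      split_ifs with h
      · rw [le_antisymm h ht.1, hgy₀, neg_zero]
      · rfl
  rw [← heq]
  exact (hσ.integral_hasStrictDerivAt y₀ y).hasDerivAt

theorem integral_unitInterval_const_sub (hFcont : Continuous F) (c : ℝ) :
    ∫ y in (0 : ℝ)..1, (c - F y) = c - ∫ y in (0 : ℝ)..1, F y := by
  simp [intervalIntegral.integral_sub intervalIntegrable_const (hFcont.intervalIntegrable _ _)]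

theorem exists_eikonal_shift_of_integral_eq_abs {g : ℝ → ℝ} (hg : Continuous g)
    (hgper : Function.Periodic g 1) (hg0 : ∀ y, 0 ≤ g y) (hp : ∫ y in (0 : ℝ)..1, g y = |p|) :
    ∃ u : ℝ → ℝ, Continuous u ∧ IsViscositySolution (eikonal g) u ∧
      ∀ y, u (y + 1) = u y + p := by
  obtain ⟨s, hs, hsp⟩ : ∃ s : ℝ, |s| = 1 ∧ s * |p| = p := by
    rcases le_or_gt 0 p with hp | hp
    · exact ⟨1, abs_one, by rw [one_mul, abs_of_nonneg hp]⟩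
    · exact ⟨-1, by simp, by rw [abs_of_neg hp]; ring⟩
  have hu (y : ℝ) : HasDerivAt (fun y => s * ∫ t in (0 : ℝ)..y, g t) (s * g y) y :=
    (hg.integral_hasStrictDerivAt 0 y).hasDerivAt.const_mul s
  have habs (y : ℝ) : |s * g y| = g y := by rw [abs_mul, hs, one_mul, abs_of_nonneg (hg0 y)]
  refine ⟨_, continuous_iff_continuousAt.2 fun y => (hu y).continuousAt,
    by simpa only [min_self] using isViscositySolution_min hu hu habs habs, fun y => ?_⟩
  rw [hgper.intervalIntegral_add_eq_add 0 y fun _ _ => hg.intervalIntegrable _ _, zero_add,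
    mul_add, hp, hsp]

theorem exists_eikonal_shift_of_abs_lt_integral {g : ℝ → ℝ} (hg : Continuous g)
    (hgper : Function.Periodic g 1) (hg0 : ∀ y, 0 ≤ g y) {y₀ : ℝ} (hgy₀ : g y₀ = 0)
    (hp : |p| < ∫ y in (0 : ℝ)..1, g y) :
    ∃ u : ℝ → ℝ, ∃ c ∈ Ioo y₀ (y₀ + 1), Continuous u ∧ IsViscositySolution (eikonal g) u ∧
      ∀ y ∈ Ioo (c - 1) y₀, u (y + 1) = u y + p := by
  set Φ : ℝ → ℝ := fun y => ∫ t in y₀..y, g t with hΦdef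
  have hΦ (y : ℝ) : HasDerivAt Φ (g y) y := (hg.integral_hasStrictDerivAt y₀ y).hasDerivAt
  have hΦcont : Continuous Φ := continuous_iff_continuousAt.2 fun y => (hΦ y).continuousAt
  have hΦmono : Monotone Φ := monotone_of_hasDerivAt_nonneg hΦ hg0
  have hΦy₀ : Φ y₀ = 0 := intervalIntegral.integral_same
  have hΦ1 (y : ℝ) : Φ (y + 1) = Φ y + ∫ y in (0 : ℝ)..1, g y := by
    simp only [hΦdef]
    rw [hgper.intervalIntegral_add_eq_add y₀ y fun _ _ => hg.intervalIntegrable _ _,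
      hgper.intervalIntegral_add_eq y₀ 0, zero_add]
  -- the kink `c` is placed so that `u` gains `p` over a period
  obtain ⟨c, hc, hcp⟩ : ∃ c ∈ Ioo y₀ (y₀ + 1), 2 * Φ c - ∫ y in (0 : ℝ)..1, g y = p :=
    intermediate_value_Ioo (f := fun x => 2 * Φ x - ∫ y in (0 : ℝ)..1, g y) (by linarith)
      ((continuous_const.mul hΦcont).sub continuous_const).continuousOn
      ⟨by simp only [hΦy₀]; linarith [neg_abs_le p],
        by simp only [hΦ1, hΦy₀]; linarith [le_abs_self p]⟩
  have hΦc : 0 ≤ Φ c := hΦy₀ ▸ hΦmono hc.1.le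
  refine ⟨fun y => min |Φ y| (2 * Φ c - Φ y), c, hc,
    hΦcont.abs.min (continuous_const.sub hΦcont),
    isViscositySolution_min (hasDerivAt_abs_integral hg hg0 hgy₀) (fun y => (hΦ y).const_sub _)
      (fun y => by split_ifs <;> simp [abs_of_nonneg (hg0 y)])
      (fun y => by simp [abs_of_nonneg (hg0 y)]), fun y ⟨_, hyy₀⟩ => ?_⟩
  have hΦy : Φ y ≤ 0 := hΦy₀ ▸ hΦmono hyy₀.le
  have hΦy1 : Φ c ≤ Φ (y + 1) := hΦmono (by linarith [hc.2])
  have h₀ : min |Φ y| (2 * Φ c - Φ y) = -Φ y := by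
    rw [abs_of_nonpos hΦy]
    exact min_eq_left (by linarith)
  have h₁ : min |Φ (y + 1)| (2 * Φ c - Φ (y + 1)) = p - Φ y := by
    rw [abs_of_nonneg (by linarith), min_eq_right (by linarith), hΦ1]
    linarith
  show min |Φ (y + 1)| (2 * Φ c - Φ (y + 1)) = min |Φ y| (2 * Φ c - Φ y) + p
  rw [h₀, h₁]
  ring

theorem Function.Periodic.le_sSup_image_Icc (hper : Function.Periodic F 1) (hF : Continuous F)
    (y : ℝ) : F y ≤ sSup (F '' Icc 0 1) := by
  have := hper.sub_int_mul_eq (x := y) ⌊y⌋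
  rw [mul_one, Int.self_sub_floor] at this
  rw [← this]
  exact le_csSup (isCompact_Icc.image hF).bddAbove
    ⟨_, ⟨Int.fract_nonneg y, (Int.fract_lt_one y).le⟩, rfl⟩

theorem IsPeriodicCellSolution.lam_eq_max {v : ℝ → ℝ} (hFcont : Continuous F)
    (hFper : Function.Periodic F 1) (hv : Continuous v) (hvper : Function.Periodic v 1)
    (hsol : IsPeriodicCellSolution F p lam v) :
    lam = max (sSup (F '' Icc (0 : ℝ) 1)) (|p| + ∫ y in (0 : ℝ)..1, F y) := by
  obtain ⟨hsub, hsuper⟩ := isPeriodicCellSolution_iff.1 hsol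
  have hG : Continuous fun y => lam - F y := continuous_const.sub hFcont
  have hu : Continuous fun y => v y + p * y := hv.add (continuous_const_mul p)
  have hshift (y : ℝ) : v (y + 1) + p * (y + 1) = v y + p * y + p := by rw [hvper]; ring
  have hFlam (y : ℝ) : F y ≤ lam := sub_nonneg.1 (hsub.nonneg_of_eikonal hu hG y)
  have hplam : |p| ≤ lam - ∫ y in (0 : ℝ)..1, F y := by
    have hv1 : v 1 = v 0 := by simpa using hvper 0
    simpa [hv1, integral_unitInterval_const_sub hFcont] using
      hsub.abs_sub_le_integral hu hG zero_le_one
  refine le_antisymm ?_ (max_le (csSup_le ((nonempty_Icc.2 zero_le_one).image F)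
    (forall_mem_image.2 fun y _ => hFlam y)) (by linarith))
  by_contra! hlt
  have hFM := hFper.le_sSup_image_Icc hFcont
  have := hsuper.integral_le_abs hu hG (fun y => by simp only [hFper y])
    (fun y => by linarith [hFM y, (max_lt_iff.1 hlt).1]) hshift
  rw [integral_unitInterval_const_sub hFcont] at this
  linarith [(max_lt_iff.1 hlt).2]

end CellProblem

/-- for continuous 1-periodic `F` and `p, λ ∈ ℝ`, the cell problem
`|p + v'(y)| + F(y) = λ` admits a continuous 1-periodic viscosity solution if and
only if `λ = max{ max_{[0,1]} F , |p| + ∫₀¹ F }`. -/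
theorem cell_problem_solvability (F : ℝ → ℝ) (hFcont : Continuous F)
    (hFper : Function.Periodic F 1) (p lam : ℝ) :
    (∃ v : ℝ → ℝ, Continuous v ∧ Function.Periodic v 1 ∧
        IsPeriodicCellSolution F p lam v) ↔
      lam = max (sSup (F '' Icc (0 : ℝ) 1)) (|p| + ∫ y in (0 : ℝ)..1, F y) := by
  refine ⟨fun ⟨v, hv, hvper, hsol⟩ => hsol.lam_eq_max hFcont hFper hv hvper, fun hlam => ?_⟩
  have hFM := hFper.le_sSup_image_Icc hFcont
  have hG : Continuous fun y => lam - F y := continuous_const.sub hFcont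
  have hGper : Function.Periodic (fun y => lam - F y) 1 := fun y => by simp only [hFper y]
  rcases le_or_gt (sSup (F '' Icc (0 : ℝ) 1)) (|p| + ∫ y in (0 : ℝ)..1, F y) with h | h
  · rw [max_eq_right h] at hlam
    obtain ⟨u, hu, hsol, hshift⟩ := exists_eikonal_shift_of_integral_eq_abs hG hGper
      (fun y => sub_nonneg.2 (hlam ▸ (hFM y).trans h))
      (by rw [integral_unitInterval_const_sub hFcont, hlam, add_sub_cancel_right])
    exact exists_isPeriodicCellSolution_of_eikonal hFper hu hsol zero_lt_one (by norm_num)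
      fun y _ => hshift y
  · rw [max_eq_left h.le] at hlam
    obtain ⟨y₀, -, hy₀⟩ := isCompact_Icc.exists_sSup_image_eq (nonempty_Icc.2 zero_le_one)
      hFcont.continuousOn
    obtain ⟨u, c, hc, hu, hsol, hshift⟩ := exists_eikonal_shift_of_abs_lt_integral hG hGper
      (fun y => sub_nonneg.2 (hlam ▸ hFM y)) (sub_eq_zero.2 (hlam.trans hy₀))
      (by rw [integral_unitInterval_const_sub hFcont]; linarith)
    exact exists_isPeriodicCellSolution_of_eikonal hFper hu hsol (by linarith [hc.2])
      (by linarith [hc.1]) hshift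
end

section
/- Let ν : [0,∞) → ℝ be convex and strictly increasing, let r ≥ 0 and let m ≥ ν(0). Then inf_{λ > 0} ( ν*(λr) + m ) / λ = r · sup{ s ≥ 0 : ν(s) ≤ m }, where the infimum is taken in ℝ ∪ {+∞}. -/
/-!
Let `T` be the supremum of the sublevel set `{s ≥ 0 | ν s ≤ m}`. It is finite because a strictly
increasing convex function grows at least linearly, and `ν T ≤ m` because `ν` is continuous on
`(0, ∞)`; testing `ν*(λ r)` at `s = T` gives `λ r T ≤ ν*(λ r) + m` for every `λ > 0`.
Conversely, for `T < a < b` the chord slope `k` of `ν` over `[a, b]` satisfies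
`ν*(k) ≤ k b - ν a ≤ k b - m`, so `λ = k / r` gives a value at most `r b`; when `r = 0` the
quotient is `(m - ν 0) / λ`, which tends to `0`.
-/

open Set

/-- The Legendre transform `ν*(q) = sup_{s ≥ 0} (q·s − ν(s))`, with values in
`ℝ ∪ {+∞}` (modelled by `EReal`). -/
noncomputable def legendre (ν : ℝ → ℝ) (q : ℝ) : EReal :=
  ⨆ s : Ici (0 : ℝ), ((q * (s : ℝ) - ν s : ℝ) : EReal)

section Legendre

variable {ν : ℝ → ℝ} {q : ℝ}

lemma legendre_le {c : ℝ} (h : ∀ s, 0 ≤ s → q * s - ν s ≤ c) : legendre ν q ≤ c :=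
  iSup_le fun s => EReal.coe_le_coe_iff.2 (h s s.2)

lemma le_legendre {s : ℝ} (hs : 0 ≤ s) : ((q * s - ν s : ℝ) : EReal) ≤ legendre ν q :=
  le_iSup (fun s : Ici (0 : ℝ) => ((q * (s : ℝ) - ν s : ℝ) : EReal)) ⟨s, hs⟩

lemma legendre_zero_le (hmono : MonotoneOn ν (Ici 0)) : legendre ν 0 ≤ ((-ν 0 : ℝ) : EReal) :=
  legendre_le fun s hs => by
    have := hmono self_mem_Ici hs hs
    linarith

/-- Outside `[a, b]` the graph of `ν` lies above the chord; inside, monotonicity suffices. -/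
lemma ConvexOn.slope_mul_sub_le (hconv : ConvexOn ℝ (Ici 0) ν) (hmono : MonotoneOn ν (Ici 0))
    {a b s : ℝ} (ha : 0 ≤ a) (hab : a < b) (hs : 0 ≤ s) :
    slope ν a b * s - ν s ≤ slope ν a b * b - ν a := by
  have hb : (0 : ℝ) ≤ b := ha.trans hab.le
  have hk : 0 ≤ slope ν a b := by
    rw [slope_def_field]
    exact div_nonneg (sub_nonneg.2 (hmono ha hb hab.le)) (sub_nonneg.2 hab.le)
  have hslope := hconv.slope_mono (mem_Ici.2 ha)
  by_cases hsab : s ∈ Icc a b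
  · have := hmono ha hs hsab.1
    nlinarith [hsab.2]
  have hchord : slope ν a b * (s - a) ≤ ν s - ν a := by
    rcases not_and_or.1 hsab with hsa | hbs
    · have hsa : s < a := lt_of_not_ge hsa
      have h := hslope ⟨hs, hsa.ne⟩ ⟨hb, hab.ne'⟩ (hsa.trans hab).le
      rwa [slope_def_field, div_le_iff_of_neg (sub_neg.2 hsa)] at h
    · have hbs : b < s := lt_of_not_ge hbs
      have h := hslope ⟨hb, hab.ne'⟩ ⟨hs, (hab.trans hbs).ne'⟩ hbs.le
      rwa [slope_def_field ν a s, le_div_iff₀ (sub_pos.2 (hab.trans hbs))] at h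
  nlinarith

lemma ConvexOn.legendre_slope_le (hconv : ConvexOn ℝ (Ici 0) ν) (hmono : MonotoneOn ν (Ici 0))
    {a b : ℝ} (ha : 0 ≤ a) (hab : a < b) :
    legendre ν (slope ν a b) ≤ ((slope ν a b * b - ν a : ℝ) : EReal) :=
  legendre_le fun _ hs => hconv.slope_mul_sub_le hmono ha hab hs

end Legendre

section Sublevel

variable {ν : ℝ → ℝ} {m : ℝ}

lemma ConvexOn.bddAbove_sublevel (hconv : ConvexOn ℝ (Ici 0) ν)
    (hmono : StrictMonoOn ν (Ici 0)) (m : ℝ) : BddAbove {s : ℝ | 0 ≤ s ∧ ν s ≤ m} := by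
  have hk : 0 < slope ν 0 1 := by
    rw [slope_def_field]
    exact div_pos (sub_pos.2 (hmono self_mem_Ici (mem_Ici.2 zero_le_one) zero_lt_one)) (by norm_num)
  refine ⟨(slope ν 0 1 - ν 0 + m) / slope ν 0 1, fun s ⟨hs, hsm⟩ => ?_⟩
  have := hconv.slope_mul_sub_le hmono.monotoneOn le_rfl zero_lt_one hs
  rw [le_div_iff₀ hk]
  linarith

lemma ConvexOn.apply_csSup_sublevel_le (hconv : ConvexOn ℝ (Ici 0) ν)
    (hbdd : BddAbove {s : ℝ | 0 ≤ s ∧ ν s ≤ m}) (hm : ν 0 ≤ m) :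
    ν (sSup {s : ℝ | 0 ≤ s ∧ ν s ≤ m}) ≤ m := by
  set A := {s : ℝ | 0 ≤ s ∧ ν s ≤ m}
  have h0 : (0 : ℝ) ∈ A := ⟨le_rfl, hm⟩
  rcases (le_csSup hbdd h0).eq_or_lt with hT | hT
  · rwa [← hT]
  have hcont : ContinuousAt ν (sSup A) := by
    refine hconv.continuousOn_interior.continuousAt ?_
    rw [interior_Ici]
    exact isOpen_Ioi.mem_nhds hT
  have hclosure : closure (ν '' A) ⊆ Iic m :=
    closure_minimal (image_subset_iff.2 fun _ hs => hs.2) isClosed_Iic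
  exact hclosure (mem_closure_image hcont (csSup_mem_closure ⟨0, h0⟩ hbdd))

end Sublevel

section Infimum

variable {ν : ℝ → ℝ} {m r : ℝ}

lemma coe_mul_le_legendre_add_div {l t : ℝ} (hl : 0 < l) (ht : 0 ≤ t) (htm : ν t ≤ m) :
    ((r * t : ℝ) : EReal) ≤ (legendre ν (l * r) + (m : EReal)) / ((l : ℝ) : EReal) := by
  rw [EReal.le_div_iff_mul_le (by exact_mod_cast hl) (EReal.coe_ne_top l), ← EReal.coe_mul]
  calc ((r * t * l : ℝ) : EReal) ≤ ((l * r * t - ν t : ℝ) : EReal) + (m : EReal) := by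
        rw [← EReal.coe_add, EReal.coe_le_coe_iff]
        linarith
    _ ≤ legendre ν (l * r) + (m : EReal) := by
        gcongr
        exact le_legendre ht

lemma iInf_legendre_mul_zero_add_div_le (hmono : MonotoneOn ν (Ici 0)) (hm : ν 0 ≤ m)
    {z : ℝ} (hz : 0 < z) :
    (⨅ (l : ℝ) (_ : 0 < l), (legendre ν (l * 0) + (m : EReal)) / ((l : ℝ) : EReal)) ≤ z := by
  have hl : 0 < (m - ν 0 + 1) / z := div_pos (by linarith) hz
  refine (iInf₂_le _ hl).trans ?_
  rw [mul_zero, EReal.div_le_iff_le_mul (by exact_mod_cast hl) (EReal.coe_ne_top _),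
    ← EReal.coe_mul]
  calc legendre ν 0 + (m : EReal) ≤ ((-ν 0 : ℝ) : EReal) + (m : EReal) := by
        gcongr
        exact legendre_zero_le hmono
    _ ≤ (((m - ν 0 + 1) / z * z : ℝ) : EReal) := by
        rw [← EReal.coe_add, EReal.coe_le_coe_iff, div_mul_cancel₀ _ hz.ne']
        linarith

/-- The slope `k` of a chord over `[a, b]` with `m ≤ ν a` is the witness `l = k / r`. -/
lemma ConvexOn.iInf_legendre_add_div_le (hconv : ConvexOn ℝ (Ici 0) ν)
    (hmono : StrictMonoOn ν (Ici 0)) {a b : ℝ} (ha : 0 ≤ a) (hab : a < b) (hma : m ≤ ν a)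
    (hr : 0 < r) :
    (⨅ (l : ℝ) (_ : 0 < l), (legendre ν (l * r) + (m : EReal)) / ((l : ℝ) : EReal))
      ≤ ((r * b : ℝ) : EReal) := by
  have hk : 0 < slope ν a b := by
    rw [slope_def_field]
    exact div_pos (sub_pos.2 (hmono ha (ha.trans hab.le) hab)) (sub_pos.2 hab)
  set k := slope ν a b
  have hl : 0 < k / r := div_pos hk hr
  refine (iInf₂_le _ hl).trans ?_
  rw [div_mul_cancel₀ k hr.ne', EReal.div_le_iff_le_mul (by exact_mod_cast hl)
    (EReal.coe_ne_top _), ← EReal.coe_mul]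
  calc legendre ν k + (m : EReal) ≤ ((k * b - ν a : ℝ) : EReal) + (m : EReal) := by
        gcongr
        exact hconv.legendre_slope_le hmono.monotoneOn ha hab
    _ ≤ ((k / r * (r * b) : ℝ) : EReal) := by
        rw [← EReal.coe_add, EReal.coe_le_coe_iff, show k / r * (r * b) = k * b by field_simp]
        linarith

end Infimum

/-- If `ν : [0,∞) → ℝ` is convex and strictly increasing, `r ≥ 0`
and `m ≥ ν(0)`, then `inf_{λ > 0} (ν*(λ r) + m)/λ = r · sup{s ≥ 0 : ν(s) ≤ m}`,
the infimum being taken in `ℝ ∪ {+∞}`. -/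
theorem legendre_inf_identity (ν : ℝ → ℝ)
    (hconv : ConvexOn ℝ (Ici (0 : ℝ)) ν) (hmono : StrictMonoOn ν (Ici (0 : ℝ)))
    (r : ℝ) (hr : 0 ≤ r) (m : ℝ) (hm : ν 0 ≤ m) :
    (⨅ (l : ℝ) (_ : 0 < l), (legendre ν (l * r) + (m : EReal)) / ((l : ℝ) : EReal))
      = ((r * sSup {s : ℝ | 0 ≤ s ∧ ν s ≤ m} : ℝ) : EReal) := by
  set A := {s : ℝ | 0 ≤ s ∧ ν s ≤ m}
  have hbdd : BddAbove A := hconv.bddAbove_sublevel hmono m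
  have hT : 0 ≤ sSup A := le_csSup hbdd ⟨le_rfl, hm⟩
  refine le_antisymm (EReal.le_of_forall_lt_iff_le.1 fun z hz => ?_)
    (le_iInf₂ fun l hl => coe_mul_le_legendre_add_div hl hT (hconv.apply_csSup_sublevel_le hbdd hm))
  rcases hr.eq_or_lt with rfl | hr
  · exact iInf_legendre_mul_zero_add_div_le hmono.monotoneOn hm (by simpa using hz)
  have hzr : sSup A < z / r := by
    rw [lt_div_iff₀ hr, mul_comm]
    exact_mod_cast hz
  obtain ⟨a, hTa, haz⟩ := exists_between hzr
  have hma : m ≤ ν a := by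
    by_contra! h
    exact (le_csSup hbdd ⟨hT.trans hTa.le, h.le⟩).not_gt hTa
  have := hconv.iInf_legendre_add_div_le hmono (hT.trans hTa.le) haz hma hr
  rwa [mul_div_cancel₀ _ hr.ne'] at this
end

section
/- Let F, θ₁, θ₂, θ₃, ψ₁, ψ₂, ψ₃ be as in assumption (B.1), let 0 < s < 1, and define p_{0,s} := (2s−1)∫₀^{1/3} ψ₃(y) dy + (2s−1)∫_{1/3}^{1} ψ₁(y) dy; p₁ := (2s−1)∫₀^{1/3} ψ₃(y) dy + ∫_{1/2}^{1} ψ₁(y) dy + ∫_{1/3}^{1/2} [s ψ₁(y) + (1−s) ψ₃(y)] dy; p₂ := (2s−1)∫₀^{1/3} ψ₃(y) dy + ∫_{1/2}^{1} ψ₁(y) dy + ∫_{1/3}^{1/2} [s ψ₁(y) − (1−s) ψ₃(y)] dy; p₃ := (2s−1)∫₀^{1/3} ψ₃(y) dy + ∫_{1/2}^{1} ψ₁(y) dy + ∫_{1/3}^{1/2} [s ψ₁(y) − (1−s) ψ₂(y)] dy; p₄ := (2s−1)∫₀^{1/3} ψ₃(y) dy + ∫_{1/2}^{1} ψ₁(y)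 dy + (2s−1)∫_{1/3}^{1/2} ψ₁(y) dy; and p_{+,s} := ∫₀^{1/3} ψ₃(y) dy + ∫_{1/2}^{1} ψ₁(y) dy + ∫_{1/3}^{1/2} [s ψ₁(y) + (1−s) ψ₃(y)] dy. Then p_{0,s} < p₄ < p₃ < p₂ < p₁ < p_{+,s}. -/
open Set intervalIntegral

open MeasureTheory in
lemma my_integral_pos_aux (f : ℝ → ℝ) (a m b c : ℝ) (ham : a ≤ m) (hmb : m < b)
    (hc : 0 < c)
    (hint : IntervalIntegrable f volume a b)
    (h0 : ∀ x ∈ Icc a b, 0 ≤ f x)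
    (hcf : ∀ x ∈ Icc m b, c ≤ f x) :
    0 < ∫ x in a..b, f x := by
  have hab : a ≤ b := le_trans ham hmb.le
  have h1 : IntervalIntegrable f volume a m := hint.mono_set (by
    rw [uIcc_of_le ham, uIcc_of_le hab]; exact Icc_subset_Icc le_rfl hmb.le)
  have h2 : IntervalIntegrable f volume m b := hint.mono_set (by
    rw [uIcc_of_le hmb.le, uIcc_of_le hab]; exact Icc_subset_Icc ham le_rfl)
  have hsplit := intervalIntegral.integral_add_adjacent_intervals h1 h2
  have e1 : 0 ≤ ∫ x in a..m, f x :=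
    intervalIntegral.integral_nonneg ham (fun x hx => h0 x ⟨hx.1, hx.2.trans hmb.le⟩)
  have e2 : (b - m) * c ≤ ∫ x in m..b, f x := by
    have := intervalIntegral.integral_mono_on (f := fun _ => c) hmb.le
      intervalIntegrable_const h2 hcf
    simpa using this
  nlinarith [mul_pos (sub_pos.mpr hmb) hc]

/-- Assumption (B.1): `F` is a smooth even function, with `0 < θ₃ < θ₂ < θ₁`,
`F(0) = 0`, `F(θ₂) = 1/2`, `F(θ₁) = F(θ₃) = 1/3`, `F(r) → ∞` as `r → ∞`,
`F` strictly increasing on `[0,θ₂]` and `[θ₁,∞)`, strictly decreasing on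
`[θ₂,θ₁]`; `ψ₁, ψ₂, ψ₃` are the inverses of the corresponding restrictions. -/
structure AssumptionB1 (F : ℝ → ℝ) (θ₁ θ₂ θ₃ : ℝ) (ψ₁ ψ₂ ψ₃ : ℝ → ℝ) : Prop where
  smooth : ContDiff ℝ (⊤ : ℕ∞) F
  even : ∀ r, F (-r) = F r
  hθ₃pos : 0 < θ₃
  hθ₃₂ : θ₃ < θ₂
  hθ₂₁ : θ₂ < θ₁
  F0 : F 0 = 0
  Fθ₂ : F θ₂ = 1 / 2
  Fθ₁ : F θ₁ = 1 / 3
  Fθ₃ : F θ₃ = 1 / 3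
  Ftop : Filter.Tendsto F Filter.atTop Filter.atTop
  Finc₁ : StrictMonoOn F (Icc 0 θ₂)
  Finc₂ : StrictMonoOn F (Ici θ₁)
  Fdec : StrictAntiOn F (Icc θ₂ θ₁)
  hψ₁ : ∀ y ∈ Ici (1 / 3 : ℝ), θ₁ ≤ ψ₁ y ∧ F (ψ₁ y) = y
  hψ₂ : ∀ y ∈ Icc (1 / 3 : ℝ) (1 / 2), ψ₂ y ∈ Icc θ₂ θ₁ ∧ F (ψ₂ y) = y
  hψ₃ : ∀ y ∈ Icc (0 : ℝ) (1 / 2), ψ₃ y ∈ Icc 0 θ₂ ∧ F (ψ₃ y) = y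



open MeasureTheory in
lemma my_integral_pos_aux' (f : ℝ → ℝ) (a m b c : ℝ) (ham : a < m) (hmb : m ≤ b)
    (hc : 0 < c)
    (hint : IntervalIntegrable f volume a b)
    (h0 : ∀ x ∈ Icc a b, 0 ≤ f x)
    (hcf : ∀ x ∈ Icc a m, c ≤ f x) :
    0 < ∫ x in a..b, f x := by
  have hab : a ≤ b := le_trans ham.le hmb
  have h1 : IntervalIntegrable f volume a m := hint.mono_set (by
    rw [uIcc_of_le ham.le, uIcc_of_le hab]; exact Icc_subset_Icc le_rfl hmb)
  have h2 : IntervalIntegrable f volume m b := hint.mono_set (by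
    rw [uIcc_of_le hmb, uIcc_of_le hab]; exact Icc_subset_Icc ham.le le_rfl)
  have hsplit := intervalIntegral.integral_add_adjacent_intervals h1 h2
  have e1 : 0 ≤ ∫ x in m..b, f x :=
    intervalIntegral.integral_nonneg hmb (fun x hx => h0 x ⟨ham.le.trans hx.1, hx.2⟩)
  have e2 : (m - a) * c ≤ ∫ x in a..m, f x := by
    have := intervalIntegral.integral_mono_on (f := fun _ => c) ham.le
      intervalIntegrable_const h1 hcf
    simpa using this
  nlinarith [mul_pos (sub_pos.mpr ham) hc]

set_option maxHeartbeats 1000000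

/-- `p_{0,s} < p₄ < p₃ < p₂ < p₁ < p_{+,s}`. -/
theorem flat_spot_gradients_ordered (F : ℝ → ℝ) (θ₁ θ₂ θ₃ : ℝ) (ψ₁ ψ₂ ψ₃ : ℝ → ℝ)
    (hB1 : AssumptionB1 F θ₁ θ₂ θ₃ ψ₁ ψ₂ ψ₃) (s : ℝ) (hs : 0 < s) (hs1 : s < 1) :
    let p0s := (2 * s - 1) * (∫ y in (0 : ℝ)..(1 / 3), ψ₃ y)
        + (2 * s - 1) * ∫ y in (1 / 3 : ℝ)..1, ψ₁ y
    let p₁ := (2 * s - 1) * (∫ y in (0 : ℝ)..(1 / 3), ψ₃ y)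
        + (∫ y in (1 / 2 : ℝ)..1, ψ₁ y)
        + ∫ y in (1 / 3 : ℝ)..(1 / 2), (s * ψ₁ y + (1 - s) * ψ₃ y)
    let p₂ := (2 * s - 1) * (∫ y in (0 : ℝ)..(1 / 3), ψ₃ y)
        + (∫ y in (1 / 2 : ℝ)..1, ψ₁ y)
        + ∫ y in (1 / 3 : ℝ)..(1 / 2), (s * ψ₁ y - (1 - s) * ψ₃ y)
    let p₃ := (2 * s - 1) * (∫ y in (0 : ℝ)..(1 / 3), ψ₃ y)
        + (∫ y in (1 / 2 : ℝ)..1, ψ₁ y)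
        + ∫ y in (1 / 3 : ℝ)..(1 / 2), (s * ψ₁ y - (1 - s) * ψ₂ y)
    let p₄ := (2 * s - 1) * (∫ y in (0 : ℝ)..(1 / 3), ψ₃ y)
        + (∫ y in (1 / 2 : ℝ)..1, ψ₁ y)
        + (2 * s - 1) * ∫ y in (1 / 3 : ℝ)..(1 / 2), ψ₁ y
    let pps := (∫ y in (0 : ℝ)..(1 / 3), ψ₃ y) + (∫ y in (1 / 2 : ℝ)..1, ψ₁ y)
        + ∫ y in (1 / 3 : ℝ)..(1 / 2), (s * ψ₁ y + (1 - s) * ψ₃ y)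
    p0s < p₄ ∧ p₄ < p₃ ∧ p₃ < p₂ ∧ p₂ < p₁ ∧ p₁ < pps := by

  intro p0s p₁ p₂ p₃ p₄ pps
  obtain ⟨_, _, hθ₃pos, hθ₃₂, hθ₂₁, F0, Fθ₂, Fθ₁, Fθ₃, _, Finc₁, Finc₂, Fdec,
    hψ₁, hψ₂, hψ₃⟩ := hB1
  have hθ₂pos : 0 < θ₂ := hθ₃pos.trans hθ₃₂
  have hθ₁pos : 0 < θ₁ := hθ₂pos.trans hθ₂₁
  -- monotonicity of ψ₁ on [1/3, 1]
  have hψ₁mono : MonotoneOn ψ₁ (Icc (1/3 : ℝ) 1) := by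
    intro y hy y' hy' hyy'
    have h := hψ₁ y hy.1
    have h' := hψ₁ y' hy'.1
    exact (Finc₂.le_iff_le h.1 h'.1).mp (by rw [h.2, h'.2]; exact hyy')
  have hψ₃mono : MonotoneOn ψ₃ (Icc (0 : ℝ) (1/2)) := by
    intro y hy y' hy' hyy'
    have h := hψ₃ y hy
    have h' := hψ₃ y' hy'
    exact (Finc₁.le_iff_le h.1 h'.1).mp (by rw [h.2, h'.2]; exact hyy')
  have hψ₂anti : AntitoneOn ψ₂ (Icc (1/3 : ℝ) (1/2)) := by
    intro y hy y' hy' hyy'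
    have h := hψ₂ y hy
    have h' := hψ₂ y' hy'
    exact (Fdec.le_iff_ge h.1 h'.1).mp (by rw [h.2, h'.2]; exact hyy')
  -- integrability
  have int₁ : IntervalIntegrable ψ₁ MeasureTheory.volume (1/3) 1 :=
    (hψ₁mono.mono (by rw [uIcc_of_le (by norm_num : (1/3:ℝ) ≤ 1)])).intervalIntegrable
  have int₁a : IntervalIntegrable ψ₁ MeasureTheory.volume (1/3) (1/2) :=
    int₁.mono_set (by
      rw [uIcc_of_le (by norm_num : (1/3:ℝ) ≤ 1/2), uIcc_of_le (by norm_num : (1/3:ℝ) ≤ 1)]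
      exact Icc_subset_Icc le_rfl (by norm_num))
  have int₁b : IntervalIntegrable ψ₁ MeasureTheory.volume (1/2) 1 :=
    int₁.mono_set (by
      rw [uIcc_of_le (by norm_num : (1/2:ℝ) ≤ 1), uIcc_of_le (by norm_num : (1/3:ℝ) ≤ 1)]
      exact Icc_subset_Icc (by norm_num) le_rfl)
  have int₃ : IntervalIntegrable ψ₃ MeasureTheory.volume 0 (1/2) :=
    (hψ₃mono.mono (by rw [uIcc_of_le (by norm_num : (0:ℝ) ≤ 1/2)])).intervalIntegrable
  have int₃a : IntervalIntegrable ψ₃ MeasureTheory.volume 0 (1/3) :=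
    int₃.mono_set (by
      rw [uIcc_of_le (by norm_num : (0:ℝ) ≤ 1/3), uIcc_of_le (by norm_num : (0:ℝ) ≤ 1/2)]
      exact Icc_subset_Icc le_rfl (by norm_num))
  have int₃b : IntervalIntegrable ψ₃ MeasureTheory.volume (1/3) (1/2) :=
    int₃.mono_set (by
      rw [uIcc_of_le (by norm_num : (1/3:ℝ) ≤ 1/2), uIcc_of_le (by norm_num : (0:ℝ) ≤ 1/2)]
      exact Icc_subset_Icc (by norm_num) le_rfl)
  have int₂ : IntervalIntegrable ψ₂ MeasureTheory.volume (1/3) (1/2) :=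
    (hψ₂anti.mono (by rw [uIcc_of_le (by norm_num : (1/3:ℝ) ≤ 1/2)])).intervalIntegrable
  -- abbreviations
  set A := ∫ y in (0:ℝ)..(1/3), ψ₃ y with hAdef
  set D := ∫ y in (1/3:ℝ)..(1/2), ψ₃ y with hDdef
  set C := ∫ y in (1/3:ℝ)..(1/2), ψ₁ y with hCdef
  set E := ∫ y in (1/3:ℝ)..(1/2), ψ₂ y with hEdef
  set B := ∫ y in (1/2:ℝ)..1, ψ₁ y with hBdef
  have hCB : (∫ y in (1/3:ℝ)..1, ψ₁ y) = C + B :=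
    (intervalIntegral.integral_add_adjacent_intervals int₁a int₁b).symm
  -- pointwise facts
  have hψ₃pos13 : 0 < ψ₃ (1/3) := by
    rcases (hψ₃ (1/3) (by norm_num)).1.1.lt_or_eq with h | h
    · exact h
    · exfalso
      have := (hψ₃ (1/3) (by norm_num)).2
      rw [← h, F0] at this; norm_num at this
  have hψ₃pos16 : 0 < ψ₃ (1/6) := by
    rcases (hψ₃ (1/6) (by norm_num)).1.1.lt_or_eq with h | h
    · exact h
    · exfalso
      have := (hψ₃ (1/6) (by norm_num)).2
      rw [← h, F0] at this; norm_num at this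
  have hψ₁gt : ψ₁ (5/12) > θ₁ := by
    have h := hψ₁ (5/12) (by norm_num)
    rcases h.1.lt_or_eq with hh | hh
    · exact hh
    · exfalso
      have := h.2
      rw [← hh, Fθ₁] at this; norm_num at this
  have hψ₃lt : ψ₃ (5/12) < θ₂ := by
    have h := hψ₃ (5/12) (by norm_num)
    rcases h.1.2.lt_or_eq with hh | hh
    · exact hh
    · exfalso
      have := h.2
      rw [hh, Fθ₂] at this; norm_num at this
  -- positivity facts
  have hA : 0 < A := by
    refine my_integral_pos_aux ψ₃ 0 (1/6) (1/3) (ψ₃ (1/6)) (by norm_num) (by norm_num)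
      hψ₃pos16 int₃a (fun x hx => (hψ₃ x ⟨hx.1, hx.2.trans (by norm_num)⟩).1.1)
      (fun x hx => hψ₃mono (by constructor <;> [norm_num; linarith [hx.2]])
        ⟨by linarith [hx.1], by linarith [hx.2]⟩ hx.1)
  have hD : 0 < D := by
    refine my_integral_pos_aux ψ₃ (1/3) (1/3) (1/2) (ψ₃ (1/3)) le_rfl (by norm_num)
      hψ₃pos13 int₃b (fun x hx => (hψ₃ x ⟨by linarith [hx.1], hx.2⟩).1.1)
      (fun x hx => hψ₃mono (by norm_num) ⟨by linarith [hx.1], hx.2⟩ hx.1)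
  have hB : 0 < B := by
    refine my_integral_pos_aux ψ₁ (1/2) (1/2) 1 θ₁ le_rfl (by norm_num) hθ₁pos int₁b
      (fun x hx => le_trans hθ₁pos.le (hψ₁ x (by simp only [mem_Ici]; linarith [hx.1])).1)
      (fun x hx => (hψ₁ x (by simp only [mem_Ici]; linarith [hx.1])).1)
  have hCE : 0 < C - E := by
    have hint : IntervalIntegrable (fun y => ψ₁ y - ψ₂ y) MeasureTheory.volume (1/3) (1/2) :=
      int₁a.sub int₂
    have key : 0 < ∫ y in (1/3:ℝ)..(1/2), (ψ₁ y - ψ₂ y) := by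
      refine my_integral_pos_aux _ (1/3) (5/12) (1/2) (ψ₁ (5/12) - θ₁) (by norm_num)
        (by norm_num) (by linarith) hint ?_ ?_
      · intro x hx
        have h1 := (hψ₁ x hx.1).1
        have h2 := (hψ₂ x hx).1.2
        simp only [mem_Icc] at *
        linarith
      · intro x hx
        have h1 : ψ₁ (5/12) ≤ ψ₁ x := hψ₁mono (by norm_num)
          ⟨by linarith [hx.1], by linarith [hx.2]⟩ hx.1
        have h2 := (hψ₂ x ⟨by linarith [hx.1], hx.2⟩).1.2
        linarith
    have := intervalIntegral.integral_sub int₁a int₂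
    rw [hCdef, hEdef]; linarith [this ▸ key]
  have hED : 0 < E - D := by
    have hint : IntervalIntegrable (fun y => ψ₂ y - ψ₃ y) MeasureTheory.volume (1/3) (1/2) :=
      int₂.sub int₃b
    have key : 0 < ∫ y in (1/3:ℝ)..(1/2), (ψ₂ y - ψ₃ y) := by
      refine my_integral_pos_aux' _ (1/3) (5/12) (1/2) (θ₂ - ψ₃ (5/12)) (by norm_num)
        (by norm_num) (by linarith) hint ?_ ?_
      · intro x hx
        have h1 := (hψ₂ x hx).1.1
        have h2 := (hψ₃ x ⟨by linarith [hx.1], hx.2⟩).1.2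
        linarith
      · intro x hx
        have h1 := (hψ₂ x ⟨hx.1, by linarith [hx.2]⟩).1.1
        have h2 : ψ₃ x ≤ ψ₃ (5/12) := hψ₃mono ⟨by linarith [hx.1], by linarith [hx.2]⟩
          (by norm_num) hx.2
        linarith
    have := intervalIntegral.integral_sub int₂ int₃b
    rw [hEdef, hDdef]; linarith [this ▸ key]
  -- composite integrals
  have hI₁ : (∫ y in (1/3:ℝ)..(1/2), (s * ψ₁ y + (1 - s) * ψ₃ y))
      = s * C + (1 - s) * D := by
    rw [intervalIntegral.integral_add (int₁a.const_mul s) (int₃b.const_mul (1 - s)),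
      intervalIntegral.integral_const_mul, intervalIntegral.integral_const_mul]
  have hI₂ : (∫ y in (1/3:ℝ)..(1/2), (s * ψ₁ y - (1 - s) * ψ₃ y))
      = s * C - (1 - s) * D := by
    rw [intervalIntegral.integral_sub (int₁a.const_mul s) (int₃b.const_mul (1 - s)),
      intervalIntegral.integral_const_mul, intervalIntegral.integral_const_mul]
  have hI₃ : (∫ y in (1/3:ℝ)..(1/2), (s * ψ₁ y - (1 - s) * ψ₂ y))
      = s * C - (1 - s) * E := by
    rw [intervalIntegral.integral_sub (int₁a.const_mul s) (int₂.const_mul (1 - s)),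
      intervalIntegral.integral_const_mul, intervalIntegral.integral_const_mul]
  simp only [p0s, p₁, p₂, p₃, p₄, pps, hCB, hI₁, hI₂, hI₃]
  have hs' : (0:ℝ) < 1 - s := by linarith
  have k1 := mul_pos hs' hB
  have k2 := mul_pos hs' hCE
  have k3 := mul_pos hs' hED
  have k4 := mul_pos hs' hD
  have k5 := mul_pos hs' hA
  refine ⟨by nlinarith [k1], by nlinarith [k2], by nlinarith [k3], by nlinarith [k4],
    by nlinarith [k5]⟩
end

section
/- Let F, θ₁, θ₂, θ₃, ψ₁, ψ₂, ψ₃ be as in assumption (B.1), let 0 < s < 1, and define p_{+,s} := ∫₀^{1/3} ψ₃(y) dy + ∫_{1/2}^{1} ψ₁(y) dy + ∫_{1/3}^{1/2} [s ψ₁(y) + (1−s) ψ₃(y)] dy and q_{−,s} := ∫_{1/2}^{4/3} ψ₁(y) dy + ∫_{1/3}^{1/2} [s ψ₁(y) + (1−s) ψ₃(y)] dy. Then for every p with p_{+,s} ≤ p ≤ q_{−,s} there exists a unique λ ∈ [0,1/3] such that p = ∫_λ^{1/3} ψ₃(y) dy + ∫_{1/2}^{1+λ} ψ₁(y) dy +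 ∫_{1/3}^{1/2} [s ψ₁(y) + (1−s) ψ₃(y)] dy. -/
open Set intervalIntegral

private theorem unique_lambda_aux (F : ℝ → ℝ) (θ₁ θ₂ θ₃ : ℝ) (ψ₁ ψ₂ ψ₃ : ℝ → ℝ)
    (hθ₃pos : 0 < θ₃) (hθ₃₂ : θ₃ < θ₂) (hθ₂₁ : θ₂ < θ₁)
    (Finc₁ : StrictMonoOn F (Icc 0 θ₂))
    (Finc₂ : StrictMonoOn F (Ici θ₁))
    (hψ₁ : ∀ y ∈ Ici (1 / 3 : ℝ), θ₁ ≤ ψ₁ y ∧ F (ψ₁ y) = y)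
    (hψ₃ : ∀ y ∈ Icc (0 : ℝ) (1 / 2), ψ₃ y ∈ Icc 0 θ₂ ∧ F (ψ₃ y) = y)
    (s : ℝ) (hs : 0 < s) (hs1 : s < 1)
    (p : ℝ)
    (hp₁ : (∫ y in (0 : ℝ)..(1 / 3), ψ₃ y) + (∫ y in (1 / 2 : ℝ)..1, ψ₁ y)
        + (∫ y in (1 / 3 : ℝ)..(1 / 2), (s * ψ₁ y + (1 - s) * ψ₃ y)) ≤ p)
    (hp₂ : p ≤ (∫ y in (1 / 2 : ℝ)..(4 / 3), ψ₁ y)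
        + ∫ y in (1 / 3 : ℝ)..(1 / 2), (s * ψ₁ y + (1 - s) * ψ₃ y)) :
    ∃! l : ℝ, l ∈ Icc (0 : ℝ) (1 / 3) ∧
      p = (∫ y in l..(1 / 3 : ℝ), ψ₃ y) + (∫ y in (1 / 2 : ℝ)..(1 + l), ψ₁ y)
        + ∫ y in (1 / 3 : ℝ)..(1 / 2), (s * ψ₁ y + (1 - s) * ψ₃ y) := by
  set C : ℝ := ∫ y in (1/3:ℝ)..(1/2), (s * ψ₁ y + (1 - s) * ψ₃ y) with hCdef
  set g : ℝ → ℝ := fun l => (∫ y in l..(1/3:ℝ), ψ₃ y) + (∫ y in (1/2:ℝ)..(1+l), ψ₁ y)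
    with hgdef
  -- monotonicity of the inverses
  have mono₃ : MonotoneOn ψ₃ (Icc (0:ℝ) (1/2)) := by
    intro a ha b hb hab
    have h1 := hψ₃ a ha
    have h2 := hψ₃ b hb
    exact (Finc₁.le_iff_le h1.1 h2.1).mp (by rw [h1.2, h2.2]; exact hab)
  have mono₁ : MonotoneOn ψ₁ (Ici (1/3:ℝ)) := by
    intro a ha b hb hab
    have h1 := hψ₁ a ha
    have h2 := hψ₁ b hb
    exact (Finc₂.le_iff_le h1.1 h2.1).mp (by rw [h1.2, h2.2]; exact hab)
  -- integrability
  have int₃ : ∀ a b : ℝ, a ∈ Icc (0:ℝ) (1/2) → b ∈ Icc (0:ℝ) (1/2) →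
      IntervalIntegrable ψ₃ MeasureTheory.volume a b := fun a b ha hb =>
    (mono₃.mono (uIcc_subset_Icc ha hb)).intervalIntegrable
  have int₁ : ∀ a b : ℝ, (1/3:ℝ) ≤ a → (1/3:ℝ) ≤ b →
      IntervalIntegrable ψ₁ MeasureTheory.volume a b := by
    intro a b ha hb
    refine (mono₁.mono fun x hx => ?_).intervalIntegrable
    exact le_trans (le_min ha hb) hx.1
  -- key difference bounds
  have key : ∀ l₁ ∈ Icc (0:ℝ) (1/3), ∀ l₂ ∈ Icc (0:ℝ) (1/3), l₁ ≤ l₂ →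
      (θ₁ - θ₂) * (l₂ - l₁) ≤ g l₂ - g l₁ ∧ g l₂ - g l₁ ≤ ψ₁ (4/3) * (l₂ - l₁) := by
    intro l₁ hl₁ l₂ hl₂ h12
    have hmem₁ : l₁ ∈ Icc (0:ℝ) (1/2) := ⟨hl₁.1, hl₁.2.trans (by norm_num)⟩
    have hmem₂ : l₂ ∈ Icc (0:ℝ) (1/2) := ⟨hl₂.1, hl₂.2.trans (by norm_num)⟩
    have e₃ : (∫ y in l₁..(1/3:ℝ), ψ₃ y) - (∫ y in l₂..(1/3:ℝ), ψ₃ y)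
        = ∫ y in l₁..l₂, ψ₃ y := by
      rw [← integral_add_adjacent_intervals (int₃ l₁ l₂ hmem₁ hmem₂)
        (int₃ l₂ (1/3) hmem₂ (by norm_num))]
      ring
    have e₁ : (∫ y in (1/2:ℝ)..(1+l₂), ψ₁ y) - (∫ y in (1/2:ℝ)..(1+l₁), ψ₁ y)
        = ∫ y in (1+l₁)..(1+l₂), ψ₁ y := by
      rw [← integral_add_adjacent_intervals (int₁ (1/2) (1+l₁) (by norm_num) (by linarith [hl₁.1]))
        (int₁ (1+l₁) (1+l₂) (by linarith [hl₁.1]) (by linarith [hl₂.1]))]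
      ring
    have hdiff : g l₂ - g l₁
        = (∫ y in (1+l₁)..(1+l₂), ψ₁ y) - ∫ y in l₁..l₂, ψ₃ y := by
      simp only [hgdef]
      rw [← e₃, ← e₁]; ring
    -- bounds on the ψ₁ integral
    have hub₁ : (∫ y in (1+l₁)..(1+l₂), ψ₁ y) ≤ ψ₁ (4/3) * (l₂ - l₁) := by
      have := integral_mono_on (f := ψ₁) (g := fun _ => ψ₁ (4/3))
        (by linarith) (int₁ (1+l₁) (1+l₂) (by linarith [hl₁.1]) (by linarith [hl₂.1]))
        (intervalIntegrable_const) (fun x hx => mono₁ (by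
          simp only [mem_Ici]; linarith [hl₁.1, hx.1]) (by norm_num)
          (by linarith [hl₂.2, hx.2]))
      simpa [mul_comm] using this
    have hlb₁ : θ₁ * (l₂ - l₁) ≤ ∫ y in (1+l₁)..(1+l₂), ψ₁ y := by
      have := integral_mono_on (f := fun _ => θ₁) (g := ψ₁)
        (by linarith) (intervalIntegrable_const)
        (int₁ (1+l₁) (1+l₂) (by linarith [hl₁.1]) (by linarith [hl₂.1]))
        (fun x hx => (hψ₁ x (by simp only [mem_Ici]; linarith [hl₁.1, hx.1])).1)
      simpa [mul_comm] using this
    -- bounds on the ψ₃ integral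
    have hub₃ : (∫ y in l₁..l₂, ψ₃ y) ≤ θ₂ * (l₂ - l₁) := by
      have := integral_mono_on (f := ψ₃) (g := fun _ => θ₂)
        h12 (int₃ l₁ l₂ hmem₁ hmem₂) (intervalIntegrable_const)
        (fun x hx => (hψ₃ x ⟨le_trans hmem₁.1 hx.1, le_trans hx.2 hmem₂.2⟩).1.2)
      simpa [mul_comm] using this
    have hlb₃ : 0 ≤ ∫ y in l₁..l₂, ψ₃ y := by
      have := integral_mono_on (f := fun _ => (0:ℝ)) (g := ψ₃)
        h12 (intervalIntegrable_const) (int₃ l₁ l₂ hmem₁ hmem₂)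
        (fun x hx => (hψ₃ x ⟨le_trans hmem₁.1 hx.1, le_trans hx.2 hmem₂.2⟩).1.1)
      simpa using this
    constructor
    · rw [hdiff]; nlinarith
    · rw [hdiff]; nlinarith
  -- g is strictly monotone on [0,1/3]
  have gmono : StrictMonoOn g (Icc (0:ℝ) (1/3)) := by
    intro a ha b hb hab
    have := (key a ha b hb hab.le).1
    nlinarith
  -- g is continuous on [0,1/3]
  have hK : (0:ℝ) ≤ ψ₁ (4/3) :=
    le_trans (by linarith : (0:ℝ) ≤ θ₁) (hψ₁ (4/3) (by norm_num)).1
  have hcont : ContinuousOn g (Icc (0:ℝ) (1/3)) := by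
    refine LipschitzOnWith.continuousOn (K := Real.toNNReal (ψ₁ (4/3))) ?_
    rw [lipschitzOnWith_iff_dist_le_mul]
    intro x hx y hy
    rw [Real.dist_eq, Real.dist_eq, Real.coe_toNNReal _ hK]
    rcases le_total x y with h | h
    · have k := key x hx y hy h
      rw [abs_of_nonpos (by nlinarith [k.1] : g x - g y ≤ 0),
        abs_of_nonpos (by linarith : x - y ≤ 0)]
      nlinarith [k.2]
    · have k := key y hy x hx h
      rw [abs_of_nonneg (by nlinarith [k.1] : 0 ≤ g x - g y),
        abs_of_nonneg (by linarith : 0 ≤ x - y)]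
      nlinarith [k.2]
  -- endpoint values
  have hg0 : g 0 = (∫ y in (0:ℝ)..(1/3), ψ₃ y) + ∫ y in (1/2:ℝ)..1, ψ₁ y := by
    simp [hgdef]
  have hg13 : g (1/3) = ∫ y in (1/2:ℝ)..(4/3), ψ₁ y := by
    simp only [hgdef]
    rw [integral_same]
    norm_num
  -- IVT
  have hmem : p - C ∈ Icc (g 0) (g (1/3)) := by
    constructor
    · rw [hg0]; linarith [hp₁]
    · rw [hg13]; linarith [hp₂]
  obtain ⟨l, hl, hgl⟩ := intermediate_value_Icc (by norm_num : (0:ℝ) ≤ 1/3) hcont hmem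
  refine ⟨l, ⟨hl, by rw [show (∫ y in l..(1/3:ℝ), ψ₃ y) + (∫ y in (1/2:ℝ)..(1+l), ψ₁ y)
      + C = g l + C from rfl, hgl]; ring⟩, ?_⟩
  intro l' ⟨hl', hpl'⟩
  have hgl' : g l' = p - C := by
    have : p = g l' + C := hpl'
    linarith
  rcases lt_trichotomy l' l with h | h | h
  · have := gmono hl' hl h; rw [hgl, hgl'] at this; linarith
  · exact h
  · have := gmono hl hl' h; rw [hgl, hgl'] at this; linarith


/-- for `p_{+,s} ≤ p ≤ q_{−,s}` there is a unique `λ ∈ [0,1/3]`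
with `p = ∫_λ^{1/3} ψ₃ + ∫_{1/2}^{1+λ} ψ₁ + ∫_{1/3}^{1/2} [s ψ₁ + (1−s) ψ₃]`. -/
theorem unique_lambda_intermediate (F : ℝ → ℝ) (θ₁ θ₂ θ₃ : ℝ) (ψ₁ ψ₂ ψ₃ : ℝ → ℝ)
    (hB1 : AssumptionB1 F θ₁ θ₂ θ₃ ψ₁ ψ₂ ψ₃) (s : ℝ) (hs : 0 < s) (hs1 : s < 1)
    (p : ℝ)
    (hp₁ : (∫ y in (0 : ℝ)..(1 / 3), ψ₃ y) + (∫ y in (1 / 2 : ℝ)..1, ψ₁ y)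
        + (∫ y in (1 / 3 : ℝ)..(1 / 2), (s * ψ₁ y + (1 - s) * ψ₃ y)) ≤ p)
    (hp₂ : p ≤ (∫ y in (1 / 2 : ℝ)..(4 / 3), ψ₁ y)
        + ∫ y in (1 / 3 : ℝ)..(1 / 2), (s * ψ₁ y + (1 - s) * ψ₃ y)) :
    ∃! l : ℝ, l ∈ Icc (0 : ℝ) (1 / 3) ∧
      p = (∫ y in l..(1 / 3 : ℝ), ψ₃ y) + (∫ y in (1 / 2 : ℝ)..(1 + l), ψ₁ y)
        + ∫ y in (1 / 3 : ℝ)..(1 / 2), (s * ψ₁ y + (1 - s) * ψ₃ y) :=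
  unique_lambda_aux F θ₁ θ₂ θ₃ ψ₁ ψ₂ ψ₃ hB1.hθ₃pos hB1.hθ₃₂ hB1.hθ₂₁
    hB1.Finc₁ hB1.Finc₂ hB1.hψ₁ hB1.hψ₃ s hs hs1 p hp₁ hp₂
end

section
/- Let (Ω, 𝓕, ℙ) be a probability space and let (Y_k)_{k ≥ 0} be independent, identically distributed, integrable real random variables with mean μ := 𝔼[Y₀]. Define ξ : [0,∞) × Ω → ℝ by ξ(t,ω) := Y_{⌊t⌋}(ω). Then with probability one, for every T > 0, lim_{δ → 0⁺} sup_{t ∈ [0,T]} | δ ∫₀^{t/δ} ξ(s,·) ds − μ t | = 0. -/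
/-!
By the strong law of large numbers, almost surely `S n / n → μ` for the partial sums
`S n = Y 0 + ⋯ + Y (n - 1)`. Fix such an `ω`. The primitive `Φ u = ∫₀ᵘ ξ(s, ω) ds` equals
`S ⌊u⌋ + (u - ⌊u⌋) Y ⌊u⌋`, and `Y n = o(n)` because it is a difference of consecutive partial sums,
so `Φ u - μ u = o(u)`. As `Φ` is continuous, for every `c > 0` there is `C` with
`|Φ u - μ u| ≤ c u + C` on `[0, ∞)`; substituting `u = t / δ` gives
`sup_{t ∈ [0, T]} |δ Φ (t / δ) - μ t| ≤ c T + δ C`.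
-/

open MeasureTheory Set Filter
open scoped Topology

open Asymptotics Finset

section FloorIntegral

variable (g : ℕ → ℝ)

theorem intervalIntegrable_comp_natFloor (a b : ℝ) :
    IntervalIntegrable (fun s => g ⌊s⌋₊) volume a b := by
  have hbound : ∀ s ≤ max a b, ‖g ⌊s⌋₊‖ ≤ ∑ k ∈ range (⌊max a b⌋₊ + 1), ‖g k‖ := fun s hs =>
    single_le_sum (f := fun k => ‖g k‖) (fun k _ => norm_nonneg _)
      (mem_range.2 (Nat.lt_succ_of_le (Nat.floor_le_floor hs)))
  rw [intervalIntegrable_iff, uIoc]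
  exact Measure.integrableOn_of_bounded measure_Ioc_lt_top.ne
    (measurable_from_nat.comp Nat.measurable_floor).aestronglyMeasurable
    (ae_restrict_of_forall_mem measurableSet_Ioc fun s hs => hbound s hs.2)

theorem integral_comp_natFloor_of_le {n : ℕ} {a b : ℝ} (ha : (n : ℝ) ≤ a) (hab : a ≤ b)
    (hb : b ≤ n + 1) : ∫ s in a..b, g ⌊s⌋₊ = (b - a) * g n := by
  rw [← smul_eq_mul, ← intervalIntegral.integral_const]
  refine intervalIntegral.integral_congr_ae ?_
  filter_upwards [Measure.ae_ne volume b] with s hsb hs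
  rw [uIoc_of_le hab] at hs
  rw [Nat.floor_eq_on_Ico n s ⟨ha.trans hs.1.le, (hs.2.lt_of_ne hsb).trans_le hb⟩]

theorem integral_comp_natFloor {u : ℝ} (hu : 0 ≤ u) :
    ∫ s in (0 : ℝ)..u, g ⌊s⌋₊ = ∑ k ∈ range ⌊u⌋₊, g k + (u - ⌊u⌋₊) * g ⌊u⌋₊ := by
  have hpieces : ∫ s in (0 : ℝ)..⌊u⌋₊, g ⌊s⌋₊ = ∑ k ∈ range ⌊u⌋₊, g k := by
    rw [← Nat.cast_zero, ← intervalIntegral.sum_integral_adjacent_intervals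
      (a := fun k : ℕ => (k : ℝ)) (fun k _ => intervalIntegrable_comp_natFloor g _ _)]
    refine sum_congr rfl fun k _ => ?_
    rw [integral_comp_natFloor_of_le g le_rfl (by simp) (by simp)]
    simp
  rw [← intervalIntegral.integral_add_adjacent_intervals (b := (⌊u⌋₊ : ℝ))
    (intervalIntegrable_comp_natFloor g _ _) (intervalIntegrable_comp_natFloor g _ _), hpieces,
    integral_comp_natFloor_of_le g le_rfl (Nat.floor_le hu) (Nat.lt_floor_add_one u).le]

end FloorIntegral

theorem isLittleO_sum_range_sub_of_tendsto_average {g : ℕ → ℝ} {μ : ℝ}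
    (h : Tendsto (fun n : ℕ => (∑ k ∈ range n, g k) / n) atTop (𝓝 μ)) :
    (fun n => ∑ k ∈ range n, (g k - μ)) =o[atTop] (fun n : ℕ => (n : ℝ)) := by
  rw [isLittleO_iff_tendsto fun n hn => by simp [Nat.cast_eq_zero.1 hn]]
  refine (sub_self μ ▸ h.sub_const μ).congr' ?_
  filter_upwards [eventually_ne_atTop 0] with n hn
  rw [sum_sub_distrib, sum_const, card_range, nsmul_eq_mul, sub_div, mul_div_cancel_left₀ _
    (Nat.cast_ne_zero.2 hn)]

theorem isLittleO_of_isLittleO_sum_range {E : Type*} [NormedAddCommGroup E] {h : ℕ → E}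
    (hS : (fun n => ∑ k ∈ range n, h k) =o[atTop] (fun n : ℕ => (n : ℝ))) :
    h =o[atTop] (fun n : ℕ => (n : ℝ)) := by
  have hsucc : (fun n : ℕ => ((n + 1 : ℕ) : ℝ)) =O[atTop] (fun n : ℕ => (n : ℝ)) := by
    refine IsBigO.of_bound 2 ?_
    filter_upwards [eventually_ge_atTop 1] with n hn
    have : (1 : ℝ) ≤ n := Nat.one_le_cast.2 hn
    rw [Real.norm_natCast, Real.norm_natCast, Nat.cast_succ]
    linarith
  have hshift := ((hS.comp_tendsto (tendsto_add_atTop_nat 1)).trans_isBigO hsucc).sub hS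
  refine hshift.congr (fun n => ?_) fun _ => rfl
  simp [sum_range_succ]

theorem isLittleO_integral_comp_natFloor_sub {g : ℕ → ℝ} {μ : ℝ}
    (h : Tendsto (fun n : ℕ => (∑ k ∈ range n, g k) / n) atTop (𝓝 μ)) :
    (fun u => (∫ s in (0 : ℝ)..u, g ⌊s⌋₊) - μ * u) =o[atTop] id := by
  have hS := isLittleO_sum_range_sub_of_tendsto_average h
  have hfloor : (fun u : ℝ => (⌊u⌋₊ : ℝ)) =O[atTop] (id : ℝ → ℝ) := by
    refine IsBigO.of_bound 1 ?_
    filter_upwards [eventually_ge_atTop 0] with u hu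
    simpa [abs_of_nonneg hu] using Nat.floor_le hu
  have hsum : (fun u : ℝ => ∑ k ∈ range ⌊u⌋₊, (g k - μ)) =o[atTop] id :=
    (hS.comp_tendsto tendsto_nat_floor_atTop).trans_isBigO hfloor
  have hlast : (fun u : ℝ => (u - ⌊u⌋₊) * (g ⌊u⌋₊ - μ)) =o[atTop] id := by
    refine IsBigO.trans_isLittleO ?_ (((isLittleO_of_isLittleO_sum_range hS).comp_tendsto
      tendsto_nat_floor_atTop).trans_isBigO hfloor)
    refine IsBigO.of_bound 1 ?_
    filter_upwards [eventually_ge_atTop 0] with u hu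
    rw [norm_mul, one_mul]
    refine mul_le_of_le_one_left (norm_nonneg _) ?_
    rw [Real.norm_of_nonneg (sub_nonneg.2 (Nat.floor_le hu))]
    linarith [Nat.lt_floor_add_one u]
  refine (hsum.add hlast).congr' ?_ EventuallyEq.rfl
  filter_upwards [eventually_ge_atTop 0] with u hu
  rw [integral_comp_natFloor g hu, sum_sub_distrib, sum_const, card_range, nsmul_eq_mul]
  ring

theorem exists_abs_le_mul_add_of_isLittleO {F : ℝ → ℝ} (hF : F =o[atTop] id)
    (hcont : ContinuousOn F (Ici 0)) {c : ℝ} (hc : 0 < c) :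
    ∃ C, ∀ u, 0 ≤ u → |F u| ≤ c * u + C := by
  obtain ⟨U, hU⟩ := eventually_atTop.1 (hF.bound hc)
  obtain ⟨C, hC⟩ := isCompact_Icc.exists_bound_of_continuousOn
    (hcont.mono (Icc_subset_Ici_self : Icc 0 U ⊆ Ici 0))
  refine ⟨max C 0, fun u hu => ?_⟩
  rcases le_total u U with huU | hUu
  · have := hC u ⟨hu, huU⟩
    rw [Real.norm_eq_abs] at this
    linarith [le_max_left C 0, mul_nonneg hc.le hu]
  · have := hU u hUu
    rw [Real.norm_eq_abs, Real.norm_eq_abs, id, abs_of_nonneg hu] at this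
    linarith [le_max_right C 0]

theorem tendstoUniformlyOn_mul_comp_div {Φ : ℝ → ℝ} {μ : ℝ}
    (hΦ : (fun u => Φ u - μ * u) =o[atTop] id) (hcont : ContinuousOn Φ (Ici 0)) (T : ℝ) :
    TendstoUniformlyOn (fun δ t => δ * Φ (t / δ)) (fun t => μ * t) (𝓝[>] 0) (Icc 0 T) := by
  rw [Metric.tendstoUniformlyOn_iff]
  intro ε hε
  obtain ⟨c, hc, hcT⟩ : ∃ c > 0, c * (|T| + 1) = ε / 2 :=
    ⟨ε / (2 * (|T| + 1)), by positivity, by field_simp⟩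
  obtain ⟨C, hC⟩ := exists_abs_le_mul_add_of_isLittleO hΦ
    (hcont.sub (continuousOn_const.mul continuousOn_id)) hc
  have hsmall : ∀ᶠ δ in 𝓝[>] (0 : ℝ), δ * C < ε / 2 := by
    have : Tendsto (fun δ : ℝ => δ * C) (𝓝[>] 0) (𝓝 0) := by
      simpa using ((tendsto_id (x := 𝓝 (0 : ℝ))).mul_const C).mono_left nhdsWithin_le_nhds
    exact this.eventually (gt_mem_nhds (half_pos hε))
  filter_upwards [hsmall, self_mem_nhdsWithin] with δ hδC (hδ : 0 < δ) t ⟨ht0, htT⟩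
  have hct : c * t ≤ ε / 2 := by
    calc c * t ≤ c * (|T| + 1) := by gcongr; linarith [le_abs_self T]
      _ = ε / 2 := hcT
  rw [dist_comm, Real.dist_eq]
  calc |δ * Φ (t / δ) - μ * t| = δ * |Φ (t / δ) - μ * (t / δ)| := by
        rw [← abs_of_pos hδ, ← abs_mul, abs_of_pos hδ]; congr 1; field_simp
    _ ≤ δ * (c * (t / δ) + C) := by gcongr; exact hC _ (div_nonneg ht0 hδ.le)
    _ = c * t + δ * C := by field_simp
    _ < ε := by linarith

theorem TendstoUniformlyOn.tendsto_sSup_abs_sub {α ι : Type*} {f : ι → α → ℝ} {g : α → ℝ}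
    {l : Filter ι} {s : Set α} (h : TendstoUniformlyOn f g l s) :
    Tendsto (fun i => sSup ((fun x => |f i x - g x|) '' s)) l (𝓝 0) := by
  rw [Metric.tendsto_nhds]
  intro ε hε
  filter_upwards [Metric.tendstoUniformlyOn_iff.1 h (ε / 2) (half_pos hε)] with i hi
  have hle : sSup ((fun x => |f i x - g x|) '' s) ≤ ε / 2 :=
    Real.sSup_le (forall_mem_image.2 fun x hx => by
      rw [← Real.dist_eq, dist_comm]; exact (hi x hx).le) (half_pos hε).le
  have hnonneg : 0 ≤ sSup ((fun x => |f i x - g x|) '' s) :=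
    Real.sSup_nonneg (forall_mem_image.2 fun x _ => abs_nonneg _)
  rw [Real.dist_eq, sub_zero, abs_of_nonneg hnonneg]
  linarith

theorem averaged_piecewise_constant_lln_general
    {Ω : Type*} [MeasurableSpace Ω] (P : Measure Ω)
    (Y : ℕ → Ω → ℝ)
    (hindep : ProbabilityTheory.iIndepFun Y P)
    (hident : ∀ k, ProbabilityTheory.IdentDistrib (Y k) (Y 0) P P)
    (hint : Integrable (Y 0) P) :
    ∀ᵐ ω ∂P, ∀ T > (0 : ℝ),
      Tendsto
        (fun δ : ℝ =>
          sSup ((fun t : ℝ =>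
            |δ * (∫ s in (0 : ℝ)..(t / δ), Y ⌊s⌋₊ ω) - (∫ x, Y 0 x ∂P) * t|) ''
              Icc (0 : ℝ) T))
        (𝓝[>] (0 : ℝ)) (𝓝 0) := by
  filter_upwards [ProbabilityTheory.strong_law_ae_real Y hint
    (fun i j hij => hindep.indepFun hij) hident] with ω hω T _
  exact TendstoUniformlyOn.tendsto_sSup_abs_sub <| tendstoUniformlyOn_mul_comp_div
    (isLittleO_integral_comp_natFloor_sub hω)
    (intervalIntegral.continuous_primitive
      (intervalIntegrable_comp_natFloor (Y · ω)) 0).continuousOn T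

/-- let `(Y_k)` be i.i.d. integrable real random variables with
mean `μ`, and let `ξ(t,ω) := Y_{⌊t⌋}(ω)` be the associated piecewise-constant
path.  Then with probability one, for every `T > 0`,
`sup_{t ∈ [0,T]} |δ ∫₀^{t/δ} ξ(s,·) ds − μ t| → 0` as `δ → 0⁺`. -/
theorem averaged_piecewise_constant_lln
    {Ω : Type*} [MeasurableSpace Ω] (P : Measure Ω) [IsProbabilityMeasure P]
    (Y : ℕ → Ω → ℝ) (hmeas : ∀ k, Measurable (Y k))
    (hindep : ProbabilityTheory.iIndepFun Y P)
    (hident : ∀ k, ProbabilityTheory.IdentDistrib (Y k) (Y 0) P P)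
    (hint : Integrable (Y 0) P) :
    ∀ᵐ ω ∂P, ∀ T > (0 : ℝ),
      Tendsto
        (fun δ : ℝ =>
          sSup ((fun t : ℝ =>
            |δ * (∫ s in (0 : ℝ)..(t / δ), Y ⌊s⌋₊ ω) - (∫ x, Y 0 x ∂P) * t|) ''
              Icc (0 : ℝ) T))
        (𝓝[>] (0 : ℝ)) (𝓝 0) :=
  averaged_piecewise_constant_lln_general P Y hindep hident hint
end
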